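/- arXiv:2406.03922 — 8 statements merged into one kernel-verified Lean document; each statement's English description precedes it below -/
import Mathlib

section
/- Every finite connected simple graph G has, for every vertex r, a DFS tree rooted at r; that is, there exists a spanning tree T of G such that every edge of G joins two vertices that are comparable in (T,r). -/
/-!
Encode a rooted spanning tree by its parent map together with the depth function. Among all
such trees (a BFS tree shows there is one) take one of maximal total depth. If some edge `uv`
of `G` joined incomparable vertices with `depth u ≤ depth v`, re-hanging the subtree of `u`
below `v` would give a spanning tree in which every vertex of that subtree is deeper and no
other vertex moves, contradicting maximality.
-/

/-- `u` lies on the unique path in `T` from `r` to `v`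
(characterized in a tree via distances). -/
def IsAncestor {V : Type*} (T : SimpleGraph V) (r u v : V) : Prop :=
  T.dist r u + T.dist u v = T.dist r v

/-- `u` and `v` are comparable in the rooted tree `(T, r)`:
one is an ancestor of the other. -/
def TreeComparable {V : Type*} (T : SimpleGraph V) (r u v : V) : Prop :=
  IsAncestor T r u v ∨ IsAncestor T r v u

/-- `(T, r)` is a DFS tree of `G`: `T` is a spanning tree of `G`
and every edge of `G` joins two vertices comparable in `(T, r)`
(i.e. every edge is a back edge). -/
def IsDFSTree {V : Type*} (G T : SimpleGraph V) (r : V) : Prop :=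
  T ≤ G ∧ T.IsTree ∧ ∀ u v : V, G.Adj u v → TreeComparable T r u v

open SimpleGraph Function

section

variable {V : Type*}

/-- A spanning tree of `G` rooted at `r`, given by its parent map `par`; `d` is the depth. -/
structure IsParentMap (G : SimpleGraph V) (r : V) (par : V → V) (d : V → ℕ) : Prop where
  parent_root : par r = r
  depth_root : d r = 0
  adj_parent : ∀ v, v ≠ r → G.Adj v (par v)
  depth_parent : ∀ v, v ≠ r → d v = d (par v) + 1

def ParAncestor (par : V → V) (u v : V) : Prop :=
  ∃ k, par^[k] v = u

def parTree (r : V) (par : V → V) : SimpleGraph V :=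
  SimpleGraph.fromRel fun x y => x ≠ r ∧ par x = y

namespace ParAncestor

variable {par : V → V} {u w : V}

theorem refl (par : V → V) (u : V) : ParAncestor par u u := ⟨0, rfl⟩

theorem of_parent : ParAncestor par u (par w) → ParAncestor par u w
  | ⟨k, hk⟩ => ⟨k + 1, hk⟩

theorem parent_of_ne : ParAncestor par u w → w ≠ u → ParAncestor par u (par w)
  | ⟨0, hk⟩, hwu => absurd hk hwu
  | ⟨k + 1, hk⟩, _ => ⟨k, hk⟩

end ParAncestor

theorem parTree_adj {r : V} {par : V → V} {x y : V} :
    (parTree r par).Adj x y ↔ x ≠ y ∧ (x ≠ r ∧ par x = y ∨ y ≠ r ∧ par y = x) := by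
  simp [parTree, fromRel_adj]

namespace IsParentMap

variable {G : SimpleGraph V} {r : V} {par : V → V} {d : V → ℕ} (h : IsParentMap G r par d)
include h

theorem parAncestor_root (v : V) : ParAncestor par r v := by
  induction hn : d v generalizing v with
  | zero =>
    by_cases hv : v = r
    · exact hv ▸ .refl par v
    · have := h.depth_parent v hv
      omega
  | succ n ih =>
    by_cases hv : v = r
    · exact hv ▸ .refl par v
    · have := h.depth_parent v hv
      exact (ih (par v) (by omega)).of_parent

theorem parAncestor_iff_eq_of_root {u : V} : ParAncestor par u r ↔ u = r := by
  refine ⟨fun ⟨k, hk⟩ => ?_, fun hu => hu ▸ .refl par r⟩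
  rw [iterate_fixed h.parent_root] at hk
  exact hk.symm

theorem parTree_le : parTree r par ≤ G := by
  intro x y hxy
  rcases (parTree_adj.mp hxy).2 with ⟨hx, rfl⟩ | ⟨hy, rfl⟩
  · exact h.adj_parent x hx
  · exact (h.adj_parent y hy).symm

theorem parTree_adj_parent {v : V} (hv : v ≠ r) : (parTree r par).Adj v (par v) := by
  refine parTree_adj.mpr ⟨fun hpar => ?_, .inl ⟨hv, rfl⟩⟩
  have := h.depth_parent v hv
  rw [← hpar] at this
  omega

theorem depth_le_depth_add_length {a b : V} (p : (parTree r par).Walk a b) :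
    d b ≤ d a + p.length := by
  induction p with
  | nil => simp
  | @cons a x b hax q ih =>
    have : d x ≤ d a + 1 := by
      rcases (parTree_adj.mp hax).2 with ⟨ha, rfl⟩ | ⟨hx, rfl⟩
      · have := h.depth_parent a ha
        omega
      · exact (h.depth_parent x hx).le
    simp only [Walk.length_cons]
    omega

theorem exists_walk_of_parAncestor {u v : V} (huv : ParAncestor par u v) :
    ∃ p : (parTree r par).Walk v u, p.length + d u = d v := by
  obtain ⟨k, hk⟩ := huv
  induction k generalizing v with
  | zero => exact ⟨hk ▸ .nil, by subst hk; simp⟩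
  | succ k ih =>
    by_cases hv : v = r
    · subst hv
      rw [iterate_fixed h.parent_root] at hk
      exact ⟨hk ▸ .nil, by subst hk; simp⟩
    · obtain ⟨q, hq⟩ := ih hk
      refine ⟨.cons (h.parTree_adj_parent hv) q, ?_⟩
      have := h.depth_parent v hv
      simp only [Walk.length_cons]
      omega

theorem parTree_connected : (parTree r par).Connected :=
  (connected_iff_exists_forall_reachable _).mpr ⟨r, fun v =>
    (h.exists_walk_of_parAncestor (h.parAncestor_root v)).choose.reverse.reachable⟩

theorem dist_add_depth {u v : V} (huv : ParAncestor par u v) :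
    (parTree r par).dist u v + d u = d v := by
  obtain ⟨p, hp⟩ := h.exists_walk_of_parAncestor huv
  obtain ⟨q, hq⟩ := h.parTree_connected.exists_walk_length_eq_dist u v
  have hle := dist_le p.reverse
  have hge := h.depth_le_depth_add_length q
  rw [Walk.length_reverse] at hle
  omega

theorem isAncestor {u v : V} (huv : ParAncestor par u v) : IsAncestor (parTree r par) r u v := by
  have hu := h.dist_add_depth (h.parAncestor_root u)
  have hv := h.dist_add_depth (h.parAncestor_root v)
  have huv := h.dist_add_depth huv
  rw [h.depth_root] at hu hv
  unfold IsAncestor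
  omega

theorem depth_lt_card [Fintype V] (v : V) : d v < Fintype.card V := by
  obtain ⟨p, hp, hlen⟩ := h.parTree_connected.exists_path_of_dist r v
  have := h.dist_add_depth (h.parAncestor_root v)
  have := hp.length_lt
  rw [h.depth_root] at *
  omega

theorem sum_depth_le [Fintype V] : ∑ v, d v ≤ Fintype.card V * Fintype.card V :=
  calc ∑ v, d v ≤ ∑ _v : V, Fintype.card V :=
        Finset.sum_le_sum fun v _ => (h.depth_lt_card v).le
    _ = Fintype.card V * Fintype.card V := by simp

/-- Every edge of the tree is `{x, par x}` for a non-root `x`, so there are fewer edges than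
vertices; a connected graph with this few edges is a tree. -/
theorem parTree_isTree [Finite V] : (parTree r par).IsTree := by
  have hconn := h.parTree_connected
  refine isTree_iff_connected_and_card.mpr
    ⟨hconn, le_antisymm ?_ hconn.card_vert_le_card_edgeSet_add_one⟩
  let edgeOf : {x // x ≠ r} → (parTree r par).edgeSet := fun x =>
    ⟨s(x.1, par x.1), h.parTree_adj_parent x.2⟩
  have hsurj : Surjective edgeOf := by
    rintro ⟨e, he⟩
    induction e using Sym2.inductionOn with
    | hf x y =>
      rcases (parTree_adj.mp (mem_edgeSet _ |>.mp he)).2 with ⟨hx, rfl⟩ | ⟨hy, rfl⟩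
      · exact ⟨⟨x, hx⟩, rfl⟩
      · exact ⟨⟨y, hy⟩, Subtype.ext Sym2.eq_swap⟩
  have := Nat.card_le_card_of_surjective edgeOf hsurj
  have := Finite.card_subtype_lt (p := (· ≠ r)) (not_not.mpr rfl)
  omega

theorem isDFSTree [Finite V]
    (hcomp : ∀ u v, G.Adj u v → ParAncestor par u v ∨ ParAncestor par v u) :
    IsDFSTree G (parTree r par) r :=
  ⟨h.parTree_le, h.parTree_isTree, fun u v huv =>
    (hcomp u v huv).imp h.isAncestor h.isAncestor⟩

/-- Re-hang the subtree of `u` below `v`: its vertices get deeper by `d v + 1 - d u ≥ 1`. -/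
theorem exists_sum_depth_lt [Fintype V] {u v : V} (huv : G.Adj u v) (hd : d u ≤ d v)
    (hnuv : ¬ParAncestor par u v) :
    ∃ par' d', IsParentMap G r par' d' ∧ ∑ w, d w < ∑ w, d' w := by
  classical
  have hur : u ≠ r := fun hu => hnuv (hu ▸ h.parAncestor_root v)
  let d' : V → ℕ := fun w => if ParAncestor par u w then d w + (d v + 1 - d u) else d w
  refine ⟨update par u v, d', ⟨?_, ?_, fun w hw => ?_, fun w hw => ?_⟩, ?_⟩
  · simp [hur.symm, h.parent_root]
  · simp [d', h.parAncestor_iff_eq_of_root, hur, h.depth_root]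
  · by_cases hwu : w = u
    · subst hwu
      simpa using huv
    · simpa [hwu] using h.adj_parent w hw
  · have := h.depth_parent w hw
    by_cases hwu : w = u
    · subst hwu
      simp only [d', ParAncestor.refl, hnuv, ↓reduceIte, update_self]
      omega
    · by_cases hdesc : ParAncestor par u w
      · simp only [d', hdesc, hdesc.parent_of_ne hwu, ↓reduceIte, ne_eq, hwu, not_false_eq_true,
          update_of_ne]
        omega
      · have : ¬ParAncestor par u (par w) := fun hp => hdesc hp.of_parent
        simp only [d', hdesc, this, ↓reduceIte, ne_eq, hwu, not_false_eq_true, update_of_ne]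
        omega
  · refine Finset.sum_lt_sum (fun w _ => ?_) ⟨u, Finset.mem_univ u, ?_⟩
    · simp only [d']
      split_ifs <;> omega
    · simp only [d', if_pos (ParAncestor.refl par u)]
      omega

theorem exists_forall_adj_parAncestor [Fintype V] :
    ∃ par' d', IsParentMap G r par' d' ∧
      ∀ u v, G.Adj u v → ParAncestor par' u v ∨ ParAncestor par' v u := by
  induction hn : Fintype.card V * Fintype.card V - ∑ v, d v using Nat.strong_induction_on
    generalizing par d with
  | _ n ih =>
    by_cases hcomp : ∀ u v, G.Adj u v → ParAncestor par u v ∨ ParAncestor par v u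
    · exact ⟨par, d, h, hcomp⟩
    push Not at hcomp
    obtain ⟨u, v, huv, hnuv, hnvu⟩ := hcomp
    obtain ⟨par', d', h', hlt⟩ :
        ∃ par' d', IsParentMap G r par' d' ∧ ∑ w, d w < ∑ w, d' w := by
      rcases le_total (d u) (d v) with hd | hd
      · exact h.exists_sum_depth_lt huv hd hnuv
      · exact h.exists_sum_depth_lt huv.symm hd hnvu
    exact ih _ (by have := h'.sum_depth_le; omega) h' rfl

end IsParentMap

theorem SimpleGraph.Connected.exists_adj_dist_add_one_eq {G : SimpleGraph V} (hG : G.Connected)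
    {r v : V} (hv : v ≠ r) : ∃ w, G.Adj v w ∧ G.dist w r + 1 = G.dist v r := by
  obtain ⟨p, hp⟩ := hG.exists_walk_length_eq_dist v r
  cases p with
  | nil => exact absurd rfl hv
  | @cons _ w _ hvw q =>
    refine ⟨w, hvw, le_antisymm ?_ ?_⟩
    · have := dist_le q
      rw [← hp, Walk.length_cons]
      omega
    · calc G.dist v r ≤ G.dist v w + G.dist w r := hG.dist_triangle
        _ = G.dist w r + 1 := by rw [dist_eq_one_iff_adj.mpr hvw, add_comm]

/-- The breadth-first search tree: depth is the distance to the root. -/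
theorem SimpleGraph.Connected.exists_isParentMap {G : SimpleGraph V} (hG : G.Connected) (r : V) :
    ∃ par d, IsParentMap G r par d := by
  classical
  choose! next hnext using fun v (hv : v ≠ r) => hG.exists_adj_dist_add_one_eq hv
  refine ⟨fun v => if v = r then r else next v, fun v => G.dist v r, ⟨by simp, dist_self,
    fun v hv => ?_, fun v hv => ?_⟩⟩
  · simpa [hv] using (hnext v hv).1
  · simpa [hv] using (hnext v hv).2.symm

end

/-- Every finite connected simple graph `G` has, for every vertex `r`,
a DFS tree rooted at `r`. -/
theorem stmt0 {V : Type*} [Fintype V] (G : SimpleGraph V) (hG : G.Connected) (r : V) :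
    ∃ T : SimpleGraph V, IsDFSTree G T r := by
  obtain ⟨par, d, h⟩ := hG.exists_isParentMap r
  obtain ⟨par', d', h', hcomp⟩ := h.exists_forall_adj_parAncestor
  exact ⟨parTree r par', h'.isDFSTree hcomp⟩
end

section
/- If (T,r) is a DFS tree of a finite simple graph G with n vertices, then the number of edges of G is at most the sum over all vertices v of depth(v), and hence at most n times the height of (T,r). -/
open SimpleGraph Finset

section

variable {V : Type*} {T : SimpleGraph V} {r u v : V}

lemma IsAncestor.exists_path_getVert_dist (hT : T.Connected) (h : IsAncestor T r u v) :
    ∃ p : T.Walk r v, p.IsPath ∧ p.getVert (T.dist r u) = u := by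
  obtain ⟨p, hp⟩ := hT.exists_walk_length_eq_dist r u
  obtain ⟨q, hq⟩ := hT.exists_walk_length_eq_dist u v
  refine ⟨p.append q, Walk.isPath_of_length_eq_dist _ ?_, ?_⟩
  · rw [Walk.length_append, hp, hq, h]
  · rw [Walk.getVert_append, ← hp]
    simp

/-- In a tree both ancestors sit on the unique path from `r` to `v`, at position their depth. -/
lemma IsAncestor.eq_of_dist_eq {u' : V} (hT : T.IsTree) (h : IsAncestor T r u v)
    (h' : IsAncestor T r u' v) (hd : T.dist r u = T.dist r u') : u = u' := by
  obtain ⟨p, hp, hpu⟩ := h.exists_path_getVert_dist hT.connected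
  obtain ⟨q, hq, hqu'⟩ := h'.exists_path_getVert_dist hT.connected
  rw [← hpu, ← hqu', (hT.existsUnique_path r v).unique hp hq, hd]

lemma IsAncestor.dist_lt (hT : T.Connected) (h : IsAncestor T r u v) (hne : u ≠ v) :
    T.dist r u < T.dist r v := by
  have := hT.pos_dist_of_ne hne
  unfold IsAncestor at h
  omega

variable [Fintype V]

open Classical in
noncomputable def properAncestors (T : SimpleGraph V) (r v : V) : Finset V :=
  {u | IsAncestor T r u v ∧ u ≠ v}

lemma mem_properAncestors : u ∈ properAncestors T r v ↔ IsAncestor T r u v ∧ u ≠ v := by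
  simp [properAncestors]

lemma card_properAncestors_le (hT : T.IsTree) : #(properAncestors T r v) ≤ T.dist r v := by
  simpa using card_le_card_of_injOn (T.dist r) (t := range (T.dist r v))
    (fun u hu ↦ mem_range.2 <| (mem_properAncestors.1 hu).1.dist_lt hT.connected
      (mem_properAncestors.1 hu).2)
    (fun u hu u' hu' hd ↦ (mem_properAncestors.1 hu).1.eq_of_dist_eq hT
      (mem_properAncestors.1 hu').1 hd)

end

lemma IsDFSTree.card_edgeFinset_le_sum_dist {V : Type*} [Fintype V] {G T : SimpleGraph V}
    {r : V} [Fintype G.edgeSet] (h : IsDFSTree G T r) :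
    #G.edgeFinset ≤ ∑ v, T.dist r v := by
  classical
  obtain ⟨-, hT, hcomp⟩ := h
  have hsub : G.edgeFinset ⊆ univ.biUnion fun v ↦ (properAncestors T r v).image (s(·, v)) := by
    intro e he
    induction e with
    | h u v =>
      have hadj : G.Adj u v := mem_edgeFinset.1 he
      simp only [mem_biUnion, mem_univ, mem_image, mem_properAncestors, true_and]
      rcases hcomp u v hadj with huv | hvu
      · exact ⟨v, u, ⟨huv, hadj.ne⟩, rfl⟩
      · exact ⟨u, v, ⟨hvu, hadj.ne'⟩, Sym2.eq_swap⟩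
  calc #G.edgeFinset
      ≤ ∑ v, #((properAncestors T r v).image (s(·, v))) :=
        (card_le_card hsub).trans card_biUnion_le
    _ ≤ ∑ v, T.dist r v :=
        sum_le_sum fun v _ ↦ card_image_le.trans (card_properAncestors_le hT)

/-- If `(T,r)` is a DFS tree of a finite simple graph `G` with `n` vertices, then the number
of edges of `G` is at most the sum over all vertices `v` of `depth v`, and hence at most
`n` times the height of `(T,r)`. -/
theorem stmt1 {V : Type*} [Fintype V] (G T : SimpleGraph V) (r : V)
    [Fintype G.edgeSet] (h : IsDFSTree G T r) :
    G.edgeFinset.card ≤ ∑ v : V, T.dist r v ∧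
    G.edgeFinset.card ≤ Fintype.card V * (Finset.univ.sup fun v : V => T.dist r v) := by
  have hsum := h.card_edgeFinset_le_sum_dist
  refine ⟨hsum, hsum.trans ?_⟩
  simpa using sum_le_card_nsmul univ (T.dist r) _ fun v _ ↦ le_sup (mem_univ v)
end

section
/- Let G be a finite simple graph on a vertex set V, and let G* be the graph on V ∪ {r} (r a new vertex) whose edges are the edges of G together with an edge from r to every vertex of V. Let (T,r) be a DFS tree of G* rooted at r. Then for each child c of r, the restriction of T to the descendant set D_c of c is a DFS tree, rooted at c, of the induced subgraph of G on D_c (which is a connected component of G). -/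
/-- `c` is a child of `r` in the rooted tree `(T, root)`. -/
def IsChild {V : Type*} (T : SimpleGraph V) (root r c : V) : Prop :=
  T.Adj r c ∧ IsAncestor T root r c ∧ r ≠ c

/-- The graph `G*` on `V ∪ {r}` (with `r = none` a new vertex) whose edges are the edges of
`G` together with an edge from `r` to every vertex of `V`. -/
def addRoot {V : Type*} (G : SimpleGraph V) : SimpleGraph (Option V) where
  Adj x y :=
    match x, y with
    | some u, some v => G.Adj u v
    | some _, none => True
    | none, some _ => True
    | none, none => False
  symm := by
    constructor
    rintro (_ | u) (_ | v) h
    · exact h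
    · trivial
    · trivial
    · exact G.adj_symm h
  loopless := by
    constructor
    rintro (_ | u) h
    · exact h
    · exact G.irrefl h

open Function

namespace SimpleGraph

variable {V α : Type*} {T : SimpleGraph V}

lemma IsAcyclic.length_eq_dist_of_isPath (hT : T.IsAcyclic) {a b : V} {p : T.Walk a b}
    (hp : p.IsPath) : p.length = T.dist a b := by
  obtain ⟨q, hq, hqlen⟩ := p.reachable.exists_path_of_dist
  have hpq : p = q :=
    congrArg Subtype.val ((hT.subsingleton_path a b).elim (⟨p, hp⟩ : T.Path a b) ⟨q, hq⟩)
  rw [hpq, hqlen]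

lemma Walk.dist_add_dist_of_length_eq_dist {a b w : V} {p : T.Walk a b}
    (hp : p.length = T.dist a b) (hw : w ∈ p.support) :
    T.dist a w + T.dist w b = T.dist a b := by
  classical
  have hsplit : (p.takeUntil w hw).length + (p.dropUntil w hw).length = p.length := by
    rw [← Walk.length_append, p.take_spec hw]
  have := dist_le (p.takeUntil w hw)
  have := dist_le (p.dropUntil w hw)
  have := (p.takeUntil w hw).reachable.dist_triangle_left b
  omega

lemma Walk.exists_comap_length_eq {f : α → V} (hf : Injective f) {u v : V} (p : T.Walk u v)
    (hp : ∀ w ∈ p.support, w ∈ Set.range f) {x y : α} (hx : f x = u) (hy : f y = v) :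
    ∃ q : (T.comap f).Walk x y, q.length = p.length := by
  induction p generalizing x y with
  | nil =>
    cases hf (hx.trans hy.symm)
    exact ⟨.nil, rfl⟩
  | cons hadj p ih =>
    obtain ⟨z, hz⟩ := hp _ (p.start_mem_support.tail _)
    obtain ⟨q, hq⟩ := ih (fun w hw => hp w (hw.tail _)) hz hy
    exact ⟨.cons (by rwa [comap_adj, hx, hz]) q, by simp [hq]⟩

section Comap

variable {f : α → V}
  (hgeo : ∀ x y : α, ∃ p : T.Walk (f x) (f y),
    p.length = T.dist (f x) (f y) ∧ ∀ w ∈ p.support, w ∈ Set.range f)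
include hgeo

lemma exists_comap_walk_length_eq_dist (hf : Injective f) (x y : α) :
    ∃ q : (T.comap f).Walk x y, q.length = T.dist (f x) (f y) := by
  obtain ⟨p, hplen, hp⟩ := hgeo x y
  obtain ⟨q, hq⟩ := p.exists_comap_length_eq hf hp rfl rfl
  exact ⟨q, hq.trans hplen⟩

lemma dist_comap_eq (hf : Injective f) (x y : α) :
    (T.comap f).dist x y = T.dist (f x) (f y) := by
  obtain ⟨q, hq⟩ := exists_comap_walk_length_eq_dist hgeo hf x y
  refine le_antisymm (hq ▸ dist_le q) ?_
  obtain ⟨q', hq'⟩ := q.reachable.exists_walk_length_eq_dist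
  simpa [hq'] using dist_le (q'.map (Hom.comap f T))

end Comap

end SimpleGraph

open SimpleGraph

section Descendants

variable {V α : Type*} {T : SimpleGraph V} {r c u v w : V}

lemma eq_of_isAncestor_root (hT : T.Connected) (h : IsAncestor T r c r) : c = r := by
  unfold IsAncestor at h
  rw [dist_self] at h
  exact hT.dist_eq_zero_iff.mp (by omega)

lemma IsAncestor.of_mem_support (hT : T.Connected) (hv : IsAncestor T r c v) {p : T.Walk c v}
    (hp : p.length = T.dist c v) (hw : w ∈ p.support) : IsAncestor T r c w := by
  have := p.dist_add_dist_of_length_eq_dist hp hw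
  have : T.dist r w ≤ T.dist r c + T.dist c w := hT.dist_triangle
  have : T.dist r v ≤ T.dist r w + T.dist w v := hT.dist_triangle
  unfold IsAncestor at *
  omega

lemma TreeComparable.of_isAncestor (h : TreeComparable T r u v) (hu : IsAncestor T r c u)
    (hv : IsAncestor T r c v) : TreeComparable T c u v := by
  unfold TreeComparable IsAncestor at *
  omega

lemma SimpleGraph.IsTree.exists_walk_length_eq_dist_of_isAncestor (hT : T.IsTree)
    (hu : IsAncestor T r c u) (hv : IsAncestor T r c v) :
    ∃ p : T.Walk u v, p.length = T.dist u v ∧ ∀ w ∈ p.support, IsAncestor T r c w := by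
  classical
  obtain ⟨pu, hpu⟩ := hT.connected.exists_walk_length_eq_dist c u
  obtain ⟨pv, hpv⟩ := hT.connected.exists_walk_length_eq_dist c v
  have hsupp : ∀ w ∈ (pu.reverse.append pv).support, IsAncestor T r c w := by
    intro w hw
    rw [Walk.mem_support_append_iff, Walk.support_reverse, List.mem_reverse] at hw
    exact hw.elim (hu.of_mem_support hT.connected hpu) (hv.of_mem_support hT.connected hpv)
  exact ⟨_, hT.isAcyclic.length_eq_dist_of_isPath (Walk.bypass_isPath _),
    fun w hw => hsupp w (Walk.support_bypass_subset_support _ hw)⟩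

theorem IsDFSTree.comap_descendants {G : SimpleGraph V} {r c : V} (h : IsDFSTree G T r)
    {f : α → V} (hf : Injective f) (hrange : ∀ w, w ∈ Set.range f ↔ IsAncestor T r c w)
    {a : α} (ha : f a = c) : IsDFSTree (G.comap f) (T.comap f) a := by
  obtain ⟨hle, htree, hback⟩ := h
  have hgeo : ∀ x y : α, ∃ p : T.Walk (f x) (f y),
      p.length = T.dist (f x) (f y) ∧ ∀ w ∈ p.support, w ∈ Set.range f := by
    intro x y
    obtain ⟨p, hp, hsupp⟩ := htree.exists_walk_length_eq_dist_of_isAncestor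
      ((hrange _).1 ⟨x, rfl⟩) ((hrange _).1 ⟨y, rfl⟩)
    exact ⟨p, hp, fun w hw => (hrange w).2 (hsupp w hw)⟩
  refine ⟨fun x y hxy => hle hxy, ⟨?_, ?_⟩, fun x y hxy => ?_⟩
  · have : Nonempty α := ⟨a⟩
    exact Connected.mk fun x y =>
      (exists_comap_walk_length_eq_dist hgeo hf x y).elim fun q _ => q.reachable
  · exact fun x p hp => htree.isAcyclic (p.map (Hom.comap f T)) (hp.map hf)
  · have := (hback _ _ hxy).of_isAncestor ((hrange _).1 ⟨x, rfl⟩) ((hrange _).1 ⟨y, rfl⟩)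
    simpa only [TreeComparable, IsAncestor, dist_comap_eq hgeo hf, ha] using this

end Descendants

/-- For a DFS tree `(T, none)` of `G*` and a child `c` of the root, the restriction of `T` to
the descendant set `D_c` of `c` is a DFS tree, rooted at `c`, of the induced subgraph of `G`
on `D_c`. -/
theorem stmt5 {V : Type*} (G : SimpleGraph V)
    (T : SimpleGraph (Option V)) (h : IsDFSTree (addRoot G) T none)
    (c : V) :
    IsDFSTree (G.induce {v : V | IsAncestor T none (some c) (some v)})
      (T.comap (fun x : {v : V | IsAncestor T none (some c) (some v)} => some (x : V)))
      ⟨c, by simp [IsAncestor]⟩ := by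
  refine h.comap_descendants (c := some c)
    (fun x y hxy => Subtype.ext (Option.some_injective _ hxy)) (fun w => ⟨?_, ?_⟩) rfl
  · rintro ⟨x, rfl⟩
    exact x.2
  · intro hw
    cases w with
    | none => exact absurd (eq_of_isAncestor_root h.2.1.connected hw) (Option.some_ne_none c)
    | some v => exact ⟨⟨v, hw⟩, rfl⟩
end

section
/- Let (T,r) be a DFS tree of a finite simple graph G, let v be a vertex with descendant set D_v, and let (T'_v, v) be any DFS tree of the induced subgraph G[D_v] rooted at v. Then the spanning subgraph of G obtained from T by deleting all tree edges with both endpoints in D_v and adding the edges of T'_v is again a spanning tree of G, and rooted at r it is a DFS tree of G. -/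
/-- The spanning subgraph obtained from `T` by deleting all edges with both endpoints in `D`
and adding the edges of `T'` (a graph on `D`). -/
def replaceSubtree {V : Type*} (T : SimpleGraph V) (D : Set V) (T' : SimpleGraph D) :
    SimpleGraph V where
  Adj a b := (T.Adj a b ∧ ¬ (a ∈ D ∧ b ∈ D)) ∨
    ∃ (ha : a ∈ D) (hb : b ∈ D), T'.Adj ⟨a, ha⟩ ⟨b, hb⟩
  symm := by
    constructor
    rintro a b (⟨hab, hn⟩ | ⟨ha, hb, hab⟩)
    · exact Or.inl ⟨hab.symm, fun ⟨x, y⟩ => hn ⟨y, x⟩⟩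
    · exact Or.inr ⟨hb, ha, hab.symm⟩
  loopless := by
    constructor
    rintro a (⟨hab, _⟩ | ⟨ha, hb, hab⟩)
    · exact hab.ne rfl
    · exact hab.ne rfl

namespace SimpleGraph

variable {V : Type*} {G : SimpleGraph V}

theorem Walk.IsCycle.induce {A : Set V} {x : V} {c : G.Walk x x} (hc : c.IsCycle)
    (hA : ∀ y ∈ c.support, y ∈ A) : (c.induce A hA).IsCycle := by
  rwa [← Walk.isCycle_map_iff_of_injective (f := (Embedding.induce A).toHom)
    Subtype.val_injective, Walk.map_induce]

theorem Walk.IsPath.append {u v w : V} {p : G.Walk u v} {q : G.Walk v w} (hp : p.IsPath)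
    (hq : q.IsPath) (hpq : ∀ x ∈ p.support, x ∈ q.support → x = v) : (p.append q).IsPath := by
  rw [Walk.isPath_def, Walk.support_append, List.nodup_append]
  refine ⟨hp.support_nodup, hq.support_nodup.tail, fun x hxp y hyq hxy => ?_⟩
  subst hxy
  obtain rfl := hpq x hxp (List.mem_of_mem_tail hyq)
  have hnd := hq.support_nodup
  rw [← q.cons_tail_support] at hnd
  exact (List.nodup_cons.mp hnd).1 hyq

theorem Walk.exists_mem_edges_of_mem_iff_not_mem {A : Set V} {a b : V} (p : G.Walk a b)
    (hab : a ∈ A ↔ b ∉ A) : ∃ x y, G.Adj x y ∧ x ∈ A ∧ y ∉ A ∧ s(x, y) ∈ p.edges := by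
  by_cases ha : a ∈ A
  · obtain ⟨d, hd, hx, hy⟩ := p.exists_boundary_dart A ha (hab.mp ha)
    exact ⟨d.fst, d.snd, d.adj, hx, hy, List.mem_map_of_mem hd⟩
  · obtain ⟨d, hd, hx, hy⟩ := p.reverse.exists_boundary_dart A (by tauto) ha
    refine ⟨d.fst, d.snd, d.adj, hx, hy, ?_⟩
    rw [← List.mem_reverse, ← Walk.edges_reverse]
    exact List.mem_map_of_mem hd

theorem isAcyclic_of_induce_of_cut_subsingleton {A : Set V} (hA : (G.induce A).IsAcyclic)
    (hAc : (G.induce Aᶜ).IsAcyclic)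
    (hcut : ∀ ⦃a b a' b'⦄, G.Adj a b → a ∈ A → b ∉ A → G.Adj a' b' → a' ∈ A → b' ∉ A →
      s(a, b) = s(a', b')) :
    G.IsAcyclic := by
  classical
  intro x c hc
  by_cases hmix : ∃ y ∈ c.support, (x ∈ A ↔ y ∉ A)
  · obtain ⟨y, hy, hxy⟩ := hmix
    obtain ⟨a, b, hab, ha, hb, he⟩ :=
      (c.takeUntil y hy).exists_mem_edges_of_mem_iff_not_mem hxy
    obtain ⟨a', b', hab', ha', hb', he'⟩ :=
      (c.dropUntil y hy).exists_mem_edges_of_mem_iff_not_mem (A := A) (by tauto)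
    have hnd := hc.isTrail.edges_nodup
    rw [← c.take_spec hy, Walk.edges_append] at hnd
    exact List.disjoint_of_nodup_append hnd he (hcut hab ha hb hab' ha' hb' ▸ he')
  · push Not at hmix
    by_cases hx : x ∈ A
    · exact hA _ (hc.induce fun y hy => by simpa [hx] using hmix y hy)
    · exact hAc _ (hc.induce (A := Aᶜ) fun y hy => by simpa [hx] using hmix y hy)

theorem IsTree.length_eq_dist (hG : G.IsTree) {a b : V} {p : G.Walk a b} (hp : p.IsPath) :
    p.length = G.dist a b := by
  obtain ⟨q, hq, hql⟩ := hG.connected.exists_path_of_dist a b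
  rw [(hG.existsUnique_path a b).unique hp hq, hql]

end SimpleGraph

open SimpleGraph

section RootedTree

variable {V : Type*} {T : SimpleGraph V}

theorem SimpleGraph.IsTree.isAncestor_iff_mem_support (hT : T.IsTree) {a b w : V}
    {p : T.Walk a b} (hp : p.IsPath) : IsAncestor T a w b ↔ w ∈ p.support := by
  classical
  unfold IsAncestor
  constructor
  · intro hw
    obtain ⟨p₁, hp₁, hl₁⟩ := hT.connected.exists_path_of_dist a w
    obtain ⟨p₂, hp₂, hl₂⟩ := hT.connected.exists_path_of_dist w b
    have hp₁₂ : (p₁.append p₂).IsPath :=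
      (p₁.append p₂).isPath_of_length_eq_dist (by rw [Walk.length_append]; omega)
    rw [← (hT.existsUnique_path a b).unique hp₁₂ hp, Walk.mem_support_append_iff]
    exact Or.inl p₁.end_mem_support
  · intro hw
    have hlen := congrArg Walk.length (p.take_spec hw)
    rw [Walk.length_append, hT.length_eq_dist (hp.takeUntil hw),
      hT.length_eq_dist (hp.dropUntil hw), hT.length_eq_dist hp] at hlen
    exact hlen

theorem IsAncestor.trans (hT : T.Connected) {r a b c : V} (hab : IsAncestor T r a b)
    (hbc : IsAncestor T r b c) : IsAncestor T r a c := by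
  unfold IsAncestor at *
  have := hT.dist_triangle (u := r) (v := a) (w := c)
  have := hT.dist_triangle (u := a) (v := b) (w := c)
  omega

theorem IsAncestor.antisymm (hT : T.Connected) {r a b : V} (hab : IsAncestor T r a b)
    (hba : IsAncestor T r b a) : a = b := by
  unfold IsAncestor at *
  exact hT.dist_eq_zero_iff.mp (by omega)

theorem SimpleGraph.IsTree.treeComparable_of_isAncestor (hT : T.IsTree) {r x y u : V}
    (hx : IsAncestor T r x u) (hy : IsAncestor T r y u) : TreeComparable T r x y := by
  classical
  obtain ⟨p, hp, -⟩ := hT.connected.exists_path_of_dist r u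
  have hxp := (hT.isAncestor_iff_mem_support hp).mp hx
  have hyp := (hT.isAncestor_iff_mem_support hp).mp hy
  rw [← p.take_spec hxp, Walk.mem_support_append_iff] at hyp
  rcases hyp with hyp | hyp
  · exact Or.inr ((hT.isAncestor_iff_mem_support (hp.takeUntil hxp)).mpr hyp)
  · have hxyu := (hT.isAncestor_iff_mem_support (hp.dropUntil hxp)).mpr hyp
    left
    unfold IsAncestor at hx hy hxyu ⊢
    omega

theorem SimpleGraph.IsTree.eq_of_isAncestor_of_adj (hT : T.IsTree) {r u b b' : V}
    (hb : IsAncestor T r b u) (hbu : T.Adj b u) (hb' : IsAncestor T r b' u)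
    (hb'u : T.Adj b' u) : b = b' := by
  have h₁ := dist_eq_one_iff_adj.mpr hbu
  have h₂ := dist_eq_one_iff_adj.mpr hb'u
  rcases hT.treeComparable_of_isAncestor hb hb' with h | h <;> unfold IsAncestor at *
  · exact hT.connected.dist_eq_zero_iff.mp (by omega)
  · exact (hT.connected.dist_eq_zero_iff.mp (by omega)).symm

def descendants (T : SimpleGraph V) (r v : V) : Set V := {u | IsAncestor T r v u}

theorem mem_descendants_self {r v : V} : v ∈ descendants T r v := by
  simp [descendants, IsAncestor]

theorem SimpleGraph.IsTree.isAncestor_of_treeComparable_of_mem_descendants (hT : T.IsTree)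
    {r v u w : V} (hu : u ∈ descendants T r v) (hw : w ∉ descendants T r v)
    (huw : TreeComparable T r u w) : IsAncestor T r w v := by
  rcases huw with huw | hwu
  · exact absurd (IsAncestor.trans hT.connected hu huw) hw
  · exact (hT.treeComparable_of_isAncestor hwu hu).resolve_right hw

section replaceSubtree

variable {D : Set V} {T' : SimpleGraph D}

theorem replaceSubtree_induce : (replaceSubtree T D T').induce D = T' := by
  ext ⟨a, ha⟩ ⟨b, hb⟩
  simp [replaceSubtree, ha, hb]

theorem replaceSubtree_induce_compl : (replaceSubtree T D T').induce Dᶜ = T.induce Dᶜ := by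
  ext ⟨a, ha⟩ ⟨b, hb⟩
  rw [Set.mem_compl_iff] at ha hb
  simp [replaceSubtree, ha, hb]

theorem replaceSubtree_le {G : SimpleGraph V} (hT : T ≤ G) (hT' : T' ≤ G.induce D) :
    replaceSubtree T D T' ≤ G := by
  rintro a b (⟨hab, -⟩ | ⟨ha, hb, hab⟩)
  · exact hT hab
  · exact hT' hab

theorem adj_of_replaceSubtree_adj {a b : V} (hab : (replaceSubtree T D T').Adj a b)
    (hb : b ∉ D) : T.Adj a b := by
  rcases hab with ⟨hab, -⟩ | ⟨-, hb', -⟩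
  · exact hab
  · exact absurd hb' hb

variable (T) in
def replaceSubtreeHom : T' →g replaceSubtree T D T' where
  toFun := Subtype.val
  map_rel' hab := Or.inr ⟨_, _, hab⟩

theorem mem_edgeSet_replaceSubtree {a b : V} (p : T.Walk a b)
    (hp : ∀ x ∈ p.support, x ∈ D → x = b) : ∀ e ∈ p.edges, e ∈ (replaceSubtree T D T').edgeSet := by
  intro e he
  induction e using Sym2.ind with
  | _ x y =>
    have hxy := p.adj_of_mem_edges he
    refine Or.inl ⟨hxy, fun ⟨hx, hy⟩ => hxy.ne ?_⟩
    exact (hp x (p.fst_mem_support_of_mem_edges he) hx).trans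
      (hp y (p.snd_mem_support_of_mem_edges he) hy).symm

end replaceSubtree

section DFS

variable {G : SimpleGraph V} {r v : V} {T' : SimpleGraph (descendants T r v)}

theorem IsDFSTree.eq_and_isAncestor_of_adj (h : IsDFSTree G T r) {a b : V} (hab : T.Adj a b)
    (ha : a ∈ descendants T r v) (hb : b ∉ descendants T r v) :
    a = v ∧ IsAncestor T r b v := by
  have hT := h.2.1
  have hbv : IsAncestor T r b v :=
    hT.isAncestor_of_treeComparable_of_mem_descendants ha hb (h.2.2 a b (h.1 hab))
  have hba : IsAncestor T r b a := IsAncestor.trans hT.connected hbv ha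
  have hdist := dist_eq_one_iff_adj.mpr hab.symm
  have hpos := hT.connected.pos_dist_of_ne (u := b) (v := v)
    (fun hbv' => hb (hbv' ▸ mem_descendants_self))
  change T.dist r v + T.dist v a = T.dist r a at ha
  unfold IsAncestor at hbv hba
  exact ⟨(hT.connected.dist_eq_zero_iff.mp (by omega)).symm, hbv⟩

theorem replaceSubtree_isAcyclic (h : IsDFSTree G T r) (hT' : T'.IsAcyclic) :
    (replaceSubtree T (descendants T r v) T').IsAcyclic := by
  refine isAcyclic_of_induce_of_cut_subsingleton (A := descendants T r v) ?_ ?_ ?_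
  · rwa [replaceSubtree_induce]
  · rw [replaceSubtree_induce_compl]
    exact h.2.1.isAcyclic.induce _
  · intro a b a' b' hab ha hb hab' ha' hb'
    replace hab := adj_of_replaceSubtree_adj hab hb
    replace hab' := adj_of_replaceSubtree_adj hab' hb'
    obtain ⟨rfl, hbv⟩ := h.eq_and_isAncestor_of_adj hab ha hb
    obtain ⟨rfl, hb'v⟩ := h.eq_and_isAncestor_of_adj hab' ha' hb'
    rw [h.2.1.eq_of_isAncestor_of_adj hbv hab.symm hb'v hab'.symm]

theorem exists_isPath_replaceSubtree_of_not_mem (hT : T.IsTree) {u : V}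
    (hu : u ∉ descendants T r v) :
    ∃ σ : (replaceSubtree T (descendants T r v) T').Walk r u,
      σ.IsPath ∧ ∀ x, IsAncestor T r x u → x ∈ σ.support := by
  obtain ⟨p, hp, -⟩ := hT.connected.exists_path_of_dist r u
  have hpD : ∀ x ∈ p.support, x ∈ descendants T r v → x = u := fun x hx hxD =>
    absurd (IsAncestor.trans hT.connected hxD ((hT.isAncestor_iff_mem_support hp).mpr hx)) hu
  refine ⟨p.transfer _ (mem_edgeSet_replaceSubtree p hpD), hp.transfer _, fun x hx => ?_⟩
  rw [Walk.support_transfer]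
  exact (hT.isAncestor_iff_mem_support hp).mp hx

/-- The path from `r` to a descendant `u` of `v` runs along `T` down to `v`,
then along `T'` down to `u`. -/
theorem exists_isPath_replaceSubtree_of_mem (hT : T.IsTree) (hT' : T'.IsTree) {u : V}
    (hu : u ∈ descendants T r v) :
    ∃ σ : (replaceSubtree T (descendants T r v) T').Walk r u, σ.IsPath ∧
      (∀ x, IsAncestor T r x v → x ∈ σ.support) ∧
      ∀ x : descendants T r v, IsAncestor T' ⟨v, mem_descendants_self⟩ x ⟨u, hu⟩ →
        ↑x ∈ σ.support := by
  obtain ⟨p, hp, -⟩ := hT.connected.exists_path_of_dist r v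
  obtain ⟨q, hq, -⟩ := hT'.connected.exists_path_of_dist ⟨v, mem_descendants_self⟩ ⟨u, hu⟩
  have hpD : ∀ x ∈ p.support, x ∈ descendants T r v → x = v := fun x hx hxD =>
    IsAncestor.antisymm hT.connected ((hT.isAncestor_iff_mem_support hp).mpr hx) hxD
  obtain ⟨σ₁, hσ₁, hσ₁p⟩ : ∃ σ₁ : (replaceSubtree T (descendants T r v) T').Walk r v,
      σ₁.support = p.support ∧ σ₁.IsPath :=
    ⟨p.transfer _ (mem_edgeSet_replaceSubtree p hpD), Walk.support_transfer _ _, hp.transfer _⟩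
  obtain ⟨σ₂, hσ₂, hσ₂p⟩ : ∃ σ₂ : (replaceSubtree T (descendants T r v) T').Walk v u,
      σ₂.support = q.support.map Subtype.val ∧ σ₂.IsPath :=
    ⟨q.map (replaceSubtreeHom T), Walk.support_map _ _, hq.map Subtype.val_injective⟩
  refine ⟨σ₁.append σ₂, hσ₁p.append hσ₂p fun x hx₁ hx₂ => ?_, fun x hx => ?_, fun x hx => ?_⟩
  · rw [hσ₂] at hx₂
    obtain ⟨x, -, rfl⟩ := List.mem_map.mp hx₂
    exact hpD _ (hσ₁ ▸ hx₁) x.2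
  · rw [Walk.mem_support_append_iff, hσ₁]
    exact Or.inl ((hT.isAncestor_iff_mem_support hp).mp hx)
  · rw [Walk.mem_support_append_iff, hσ₂]
    exact Or.inr (List.mem_map_of_mem ((hT'.isAncestor_iff_mem_support hq).mp hx))

theorem replaceSubtree_connected (hT : T.IsTree) (hT' : T'.IsTree) :
    (replaceSubtree T (descendants T r v) T').Connected := by
  refine (connected_iff_exists_forall_reachable _).mpr ⟨r, fun u => ?_⟩
  by_cases hu : u ∈ descendants T r v
  · obtain ⟨σ, -⟩ := exists_isPath_replaceSubtree_of_mem hT hT' hu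
    exact σ.reachable
  · obtain ⟨σ, -⟩ := exists_isPath_replaceSubtree_of_not_mem (T' := T') hT hu
    exact σ.reachable

theorem replaceSubtree_isTree (h : IsDFSTree G T r) (hT' : T'.IsTree) :
    (replaceSubtree T (descendants T r v) T').IsTree :=
  ⟨replaceSubtree_connected h.2.1 hT', replaceSubtree_isAcyclic h hT'.isAcyclic⟩

theorem isAncestor_replaceSubtree_of_not_mem (h : IsDFSTree G T r) (hT' : T'.IsTree) {x u : V}
    (hu : u ∉ descendants T r v) (hx : IsAncestor T r x u) :
    IsAncestor (replaceSubtree T (descendants T r v) T') r x u := by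
  obtain ⟨σ, hσ, hσx⟩ := exists_isPath_replaceSubtree_of_not_mem (T' := T') h.2.1 hu
  exact ((replaceSubtree_isTree h hT').isAncestor_iff_mem_support hσ).mpr (hσx x hx)

theorem isAncestor_replaceSubtree_of_mem (h : IsDFSTree G T r) (hT' : T'.IsTree) {x u : V}
    (hu : u ∈ descendants T r v) (hx : IsAncestor T r x v) :
    IsAncestor (replaceSubtree T (descendants T r v) T') r x u := by
  obtain ⟨σ, hσ, hσx, -⟩ := exists_isPath_replaceSubtree_of_mem h.2.1 hT' hu
  exact ((replaceSubtree_isTree h hT').isAncestor_iff_mem_support hσ).mpr (hσx x hx)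

theorem isAncestor_replaceSubtree_of_isAncestor_subtree (h : IsDFSTree G T r) (hT' : T'.IsTree)
    {x u : descendants T r v} (hx : IsAncestor T' ⟨v, mem_descendants_self⟩ x u) :
    IsAncestor (replaceSubtree T (descendants T r v) T') r x u := by
  obtain ⟨σ, hσ, -, hσx⟩ := exists_isPath_replaceSubtree_of_mem h.2.1 hT' u.2
  exact ((replaceSubtree_isTree h hT').isAncestor_iff_mem_support hσ).mpr (hσx x hx)

theorem IsDFSTree.replaceSubtree (h : IsDFSTree G T r)
    (h' : IsDFSTree (G.induce (descendants T r v)) T' ⟨v, mem_descendants_self⟩) :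
    IsDFSTree G (replaceSubtree T (descendants T r v) T') r := by
  refine ⟨replaceSubtree_le h.1 h'.1, replaceSubtree_isTree h h'.2.1, fun u w huw => ?_⟩
  have hT := h.2.1
  by_cases hu : u ∈ descendants T r v <;> by_cases hw : w ∈ descendants T r v
  · exact (h'.2.2 ⟨u, hu⟩ ⟨w, hw⟩ huw).imp
      (isAncestor_replaceSubtree_of_isAncestor_subtree h h'.2.1)
      (isAncestor_replaceSubtree_of_isAncestor_subtree h h'.2.1)
  · exact Or.inr (isAncestor_replaceSubtree_of_mem h h'.2.1 hu
      (hT.isAncestor_of_treeComparable_of_mem_descendants hu hw (h.2.2 u w huw)))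
  · exact Or.inl (isAncestor_replaceSubtree_of_mem h h'.2.1 hw
      (hT.isAncestor_of_treeComparable_of_mem_descendants hw hu (h.2.2 w u huw.symm)))
  · exact (h.2.2 u w huw).imp (isAncestor_replaceSubtree_of_not_mem h h'.2.1 hw)
      (isAncestor_replaceSubtree_of_not_mem h h'.2.1 hu)

end DFS

end RootedTree

/-- Let `(T,r)` be a DFS tree of `G`, `v` a vertex with descendant set `D_v`, and `(T'_v, v)`
any DFS tree of `G[D_v]` rooted at `v`. Then replacing in `T` the edges inside `D_v` by the
edges of `T'_v` yields again a spanning tree of `G` which, rooted at `r`, is a DFS tree of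
`G`. -/
theorem stmt8 {V : Type*} (G T : SimpleGraph V) (r : V)
    (h : IsDFSTree G T r) (v : V)
    (T' : SimpleGraph {u : V | IsAncestor T r v u})
    (h' : IsDFSTree (G.induce {u : V | IsAncestor T r v u}) T'
      ⟨v, by simp [IsAncestor]⟩) :
    IsDFSTree G (replaceSubtree T {u : V | IsAncestor T r v u} T') r :=
  h.replaceSubtree h'
end

section
/- Let G be a finite connected simple graph and let P : r = p_0 — p_1 — … — p_t be a simple path in G. Let C_1, …, C_f be the connected components of the induced subgraph of G on the vertices outside P. For each i, let {x_i, y_i} be an edge of G with y_i ∈ C_i and x_i = p_{j_i} on P, where j_i is maximal among all indices j such that p_j has a neighbor in C_i; and let (T_i, y_i) be a DFS tree of G[C_i] rooted at y_i. Then the spanning subgraph T of G consisting of the edges of P, the edges {x_i, y_i} for all i, and the edges of all the T_i is a spanning tree of G, and (T, r) is a DFS tree of G. -/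
/-- The vertex set (as a subset of `V`) of the connected component `K` of the subgraph of `G`
induced on the vertices outside the path `p`. -/
def compSet {V : Type*} (G : SimpleGraph V) {r s : V} (p : G.Walk r s)
    (K : (G.induce {v : V | v ∉ p.support}).ConnectedComponent) : Set V :=
  {v : V | ∃ h : v ∉ p.support,
    (G.induce {v : V | v ∉ p.support}).connectedComponentMk ⟨v, h⟩ = K}

namespace SimpleGraph

variable {V W : Type*} {T : SimpleGraph V}

theorem Walk.IsPath.append_cons {G : SimpleGraph V} {u v w x : V}
    {p : G.Walk u v} {q : G.Walk w x} (hp : p.IsPath) (hq : q.IsPath) (h : G.Adj v w)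
    (hpq : ∀ z ∈ p.support, z ∉ q.support) : (p.append (.cons h q)).IsPath := by
  rw [Walk.isPath_def, Walk.support_append, Walk.support_cons,
    List.tail_cons, List.nodup_append]
  exact ⟨hp.support_nodup, hq.support_nodup, fun a ha b hb hab => hpq a ha (hab ▸ hb)⟩

theorem isAcyclic_of_rank (rank : V → ℕ) (hne : ∀ ⦃a b⦄, T.Adj a b → rank a ≠ rank b)
    (hunique : ∀ ⦃v a b⦄, T.Adj v a → T.Adj v b → rank a < rank v → rank b < rank v → a = b) :
    T.IsAcyclic := by
  classical
  intro x c hc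
  obtain ⟨m, hm, hmax⟩ := c.support.toFinset.exists_max_image rank ⟨x, by simp⟩
  rw [List.mem_toFinset] at hm
  set c' := c.rotate m hm
  have hc' : c'.IsCycle := hc.rotate hm
  have hlt : ∀ i, T.Adj m (c'.getVert i) → rank (c'.getVert i) < rank m := fun i h =>
    (hmax _ <| List.mem_toFinset.2 <| (c.mem_support_rotate_iff m hm).1 <|
      c'.getVert_mem_support i).lt_of_ne (hne h).symm
  exact hc'.snd_ne_penultimate <| hunique (c'.adj_snd hc'.not_nil)
    (c'.adj_penultimate hc'.not_nil).symm (hlt _ (c'.adj_snd hc'.not_nil))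
    (hlt _ (c'.adj_penultimate hc'.not_nil).symm)

theorem IsAcyclic.length_eq_dist (hT : T.IsAcyclic) {a b : V} {w : T.Walk a b} (hw : w.IsPath) :
    w.length = T.dist a b := by
  obtain ⟨q, hq, hlen⟩ := w.reachable.exists_path_of_dist
  rw [← hlen, show w = q from
    congrArg Subtype.val ((hT.subsingleton_path a b).elim ⟨w, hw⟩ ⟨q, hq⟩)]

theorem IsAcyclic.isAncestor_of_mem_support (hT : T.IsAcyclic) {a b x : V} {w : T.Walk a b}
    (hw : w.IsPath) (hx : x ∈ w.support) : IsAncestor T a x b := by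
  obtain ⟨q₁, q₂, hq₁, hq₂, rfl⟩ := hw.mem_support_iff_exists_append.mp hx
  rw [IsAncestor, ← hT.length_eq_dist hq₁, ← hT.length_eq_dist hq₂, ← hT.length_eq_dist hw,
    Walk.length_append]

theorem IsAcyclic.dist_map (hT : T.IsAcyclic) {H : SimpleGraph W} (f : H →g T)
    (hf : Function.Injective f) {a b : W} (hab : H.Reachable a b) :
    T.dist (f a) (f b) = H.dist a b := by
  obtain ⟨q, hq, hlen⟩ := hab.exists_path_of_dist
  rw [← hlen, ← q.length_map f, hT.length_eq_dist (hq.map hf)]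

theorem IsTree.eq_of_adj_of_dist_lt (hT : T.IsTree) (root : V) {v a b : V} (ha : T.Adj v a)
    (hb : T.Adj v b) (hav : T.dist root a < T.dist root v) (hbv : T.dist root b < T.dist root v) :
    a = b := by
  have key : ∀ c, T.Adj v c → T.dist root c < T.dist root v →
      ∃ w : T.Walk root v, w.IsPath ∧ w.penultimate = c := by
    intro c hc hcv
    obtain ⟨q, -, hq⟩ := (hT.connected root c).exists_path_of_dist
    have hlen : (q.concat hc.symm).length = T.dist root v := by
      have := hT.dist_eq_dist_add_one_of_adj root hc
      rw [Walk.length_concat, hq]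
      omega
    exact ⟨_, (q.concat hc.symm).isPath_of_length_eq_dist hlen, Walk.penultimate_concat ..⟩
  obtain ⟨wa, hwa, rfl⟩ := key a ha hav
  obtain ⟨wb, hwb, rfl⟩ := key b hb hbv
  rw [show wa = wb from congrArg Subtype.val
    ((hT.isAcyclic.subsingleton_path root v).elim ⟨wa, hwa⟩ ⟨wb, hwb⟩)]

end SimpleGraph

open SimpleGraph

section Ancestor

variable {V W : Type*} {T : SimpleGraph V}

theorem IsAncestor.map (hT : T.IsAcyclic) {H : SimpleGraph W} (hH : H.Connected) (f : H →g T)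
    (hf : Function.Injective f) {a b c : W} (h : IsAncestor H a b c) :
    IsAncestor T (f a) (f b) (f c) := by
  rwa [IsAncestor, hT.dist_map f hf (hH a b), hT.dist_map f hf (hH b c),
    hT.dist_map f hf (hH a c)]

theorem IsAncestor.of_isAncestor_root {r y u v : V} (h : IsAncestor T y u v)
    (hu : IsAncestor T r y u) (hv : IsAncestor T r y v) : IsAncestor T r u v := by
  unfold IsAncestor at *
  omega

end Ancestor

section GluedTree

variable {V : Type*} {G : SimpleGraph V} {r s : V} {p : G.Walk r s}
  {K K' : (G.induce {v : V | v ∉ p.support}).ConnectedComponent}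

theorem eq_of_mem_compSet {v : V} (h : v ∈ compSet G p K)
    (h' : v ∈ compSet G p K') : K = K' := by
  obtain ⟨_, rfl⟩ := h
  obtain ⟨_, rfl⟩ := h'
  rfl

theorem mem_compSet_connectedComponentMk {v : V} (hv : v ∉ p.support) :
    v ∈ compSet G p ((G.induce {v : V | v ∉ p.support}).connectedComponentMk ⟨v, hv⟩) :=
  ⟨hv, rfl⟩

variable (p) in
def glueTree
    (y : (G.induce {v : V | v ∉ p.support}).ConnectedComponent → {v : V | v ∉ p.support})
    (j : (G.induce {v : V | v ∉ p.support}).ConnectedComponent → ℕ)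
    (Ti : ∀ K, SimpleGraph (compSet G p K)) : SimpleGraph V :=
  SimpleGraph.fromRel fun a b =>
    s(a, b) ∈ p.edges ∨
    (∃ K, a = p.getVert (j K) ∧ b = (y K : V)) ∨
    (∃ K, ∃ (ha : a ∈ compSet G p K) (hb : b ∈ compSet G p K),
      (Ti K).Adj ⟨a, ha⟩ ⟨b, hb⟩)

variable
  {y : (G.induce {v : V | v ∉ p.support}).ConnectedComponent → {v : V | v ∉ p.support}}
  {j : (G.induce {v : V | v ∉ p.support}).ConnectedComponent → ℕ}
  {Ti : ∀ K, SimpleGraph (compSet G p K)}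

theorem glueTree_le (hadj : ∀ K, G.Adj (p.getVert (j K)) (y K))
    (hTi : ∀ K, Ti K ≤ G.induce (compSet G p K)) : glueTree p y j Ti ≤ G := by
  intro a b h
  rcases ((fromRel_adj ..).1 h).2 with
    (h | ⟨K, rfl, rfl⟩ | ⟨K, _, _, h⟩) | (h | ⟨K, rfl, rfl⟩ | ⟨K, _, _, h⟩)
  · exact p.adj_of_mem_edges h
  · exact hadj K
  · exact hTi K h
  · exact (p.adj_of_mem_edges h).symm
  · exact (hadj K).symm
  · exact (hTi K h).symm

theorem glueTree_adj_of_mem_edges {a b : V} (h : s(a, b) ∈ p.edges) :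
    (glueTree p y j Ti).Adj a b :=
  (fromRel_adj ..).2 ⟨(p.adj_of_mem_edges h).ne, .inl (.inl h)⟩

theorem glueTree_adj_connector (K) : (glueTree p y j Ti).Adj (p.getVert (j K)) (y K) :=
  (fromRel_adj ..).2
    ⟨fun h => (y K).2 (h ▸ p.getVert_mem_support _), .inl (.inr (.inl ⟨K, rfl, rfl⟩))⟩

def glueTreeComponentHom (K) : Ti K →g glueTree p y j Ti where
  toFun := Subtype.val
  map_rel' {a b} h :=
    (fromRel_adj ..).2 ⟨fun hab => h.ne (Subtype.ext hab), .inl (.inr (.inr ⟨K, a.2, b.2, h⟩))⟩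

theorem glueTree_exists_isPath_getVert (hp : p.IsPath) (i : ℕ) :
    ∃ w : (glueTree p y j Ti).Walk r (p.getVert i), w.IsPath ∧
      (∀ k ≤ i, p.getVert k ∈ w.support) ∧ ∀ z ∈ w.support, z ∈ p.support := by
  have hedges : ∀ e ∈ (p.take i).edges, e ∈ (glueTree p y j Ti).edgeSet := by
    intro e he
    rw [Walk.edges_take] at he
    induction e using Sym2.ind with
    | h a b => exact glueTree_adj_of_mem_edges (List.mem_of_mem_take he)
  refine ⟨(p.take i).transfer _ hedges, (hp.take i).transfer hedges, fun k hk => ?_,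
    fun z hz => ?_⟩
  · simpa [Walk.support_transfer, Walk.take_getVert, min_eq_right hk] using
      (p.take i).getVert_mem_support k
  · rw [Walk.support_transfer, Walk.support_take] at hz
    exact List.mem_of_mem_take hz

theorem glueTree_exists_isPath_of_mem_compSet (hp : p.IsPath)
    (hy : ∀ K, (y K : V) ∈ compSet G p K) (hconn : ∀ K, (Ti K).Connected) {v : V}
    (hv : v ∈ compSet G p K) :
    ∃ w : (glueTree p y j Ti).Walk r v, w.IsPath ∧ (∀ k ≤ j K, p.getVert k ∈ w.support) ∧
      (y K : V) ∈ w.support := by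
  obtain ⟨w₁, hw₁, hsub₁, hp₁⟩ :=
    glueTree_exists_isPath_getVert (y := y) (j := j) (Ti := Ti) hp (j K)
  obtain ⟨q, hq, -⟩ := (hconn K ⟨y K, hy K⟩ ⟨v, hv⟩).exists_path_of_dist
  have hw₂ := hq.map (f := glueTreeComponentHom (y := y) (j := j) K) Subtype.val_injective
  refine ⟨w₁.append (.cons (glueTree_adj_connector K) (q.map (glueTreeComponentHom K))),
    hw₁.append_cons hw₂ _ fun z hz hz' => ?_, fun k hk => ?_, ?_⟩
  · rw [Walk.support_map, List.mem_map] at hz'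
    obtain ⟨z', -, rfl⟩ := hz'
    exact z'.2.1 (hp₁ _ hz)
  · exact (Walk.mem_support_append_iff _ _).2 (.inl (hsub₁ k hk))
  · exact (Walk.mem_support_append_iff _ _).2
      (.inr (List.mem_cons_of_mem _ (Walk.start_mem_support _)))

theorem glueTree_connected (hp : p.IsPath) (hy : ∀ K, (y K : V) ∈ compSet G p K)
    (hconn : ∀ K, (Ti K).Connected) : (glueTree p y j Ti).Connected := by
  refine (connected_iff_exists_forall_reachable _).2 ⟨r, fun v => ?_⟩
  by_cases hv : v ∈ p.support
  · obtain ⟨i, rfl, -⟩ := Walk.mem_support_iff_exists_getVert.1 hv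
    obtain ⟨w, -⟩ := glueTree_exists_isPath_getVert (y := y) (Ti := Ti) hp i
    exact w.reachable
  · obtain ⟨w, -⟩ :=
      glueTree_exists_isPath_of_mem_compSet hp hy hconn (mem_compSet_connectedComponentMk hv)
    exact w.reachable

theorem exists_glueTree_depth (hp : p.IsPath) (hy : ∀ K, (y K : V) ∈ compSet G p K) :
    ∃ t : V → ℕ, (∀ i ≤ p.length, t (p.getVert i) = i) ∧
      ∀ K v (hv : v ∈ compSet G p K), t v = j K + 1 + (Ti K).dist ⟨y K, hy K⟩ ⟨v, hv⟩ := by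
  classical
  refine ⟨fun v => if hv : v ∈ p.support then p.support.idxOf v else
    j ((G.induce {v : V | v ∉ p.support}).connectedComponentMk ⟨v, hv⟩) + 1 +
      (Ti _).dist ⟨y _, hy _⟩ ⟨v, mem_compSet_connectedComponentMk hv⟩, ?_, ?_⟩
  · intro i hi
    simp [p.getVert_eq_support_getElem hi, hp.support_nodup.idxOf_getElem]
  · rintro K v ⟨hv, rfl⟩
    simp [hv]

theorem glueTree_parent_cases (hy : ∀ K, (y K : V) ∈ compSet G p K)
    (hjle : ∀ K, j K ≤ p.length) (hTree : ∀ K, (Ti K).IsTree) {t : V → ℕ}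
    (ht₁ : ∀ i ≤ p.length, t (p.getVert i) = i)
    (ht₂ : ∀ K v (hv : v ∈ compSet G p K), t v = j K + 1 + (Ti K).dist ⟨y K, hy K⟩ ⟨v, hv⟩)
    {v a : V} (h : (glueTree p y j Ti).Adj v a) (hle : t a ≤ t v) :
    (∃ i < p.length, a = p.getVert i ∧ v = p.getVert (i + 1)) ∨
    (∃ K, a = p.getVert (j K) ∧ v = y K) ∨
    ∃ K, ∃ (hv : v ∈ compSet G p K) (ha : a ∈ compSet G p K), (Ti K).Adj ⟨v, hv⟩ ⟨a, ha⟩ ∧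
      (Ti K).dist ⟨y K, hy K⟩ ⟨a, ha⟩ < (Ti K).dist ⟨y K, hy K⟩ ⟨v, hv⟩ := by
  have hedge : ∀ {a b}, s(a, b) ∈ p.edges → t b ≤ t a →
      ∃ i < p.length, b = p.getVert i ∧ a = p.getVert (i + 1) := by
    intro a b he hle
    obtain ⟨i, hi, he⟩ := (Walk.mk_mem_edges_iff_exists p).1 he
    rcases Sym2.eq_iff.1 he with ⟨rfl, rfl⟩ | ⟨rfl, rfl⟩
    · rw [ht₁ _ hi.le, ht₁ _ hi] at hle
      omega
    · exact ⟨i, hi, rfl, rfl⟩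
  have htree : ∀ K (hv : v ∈ compSet G p K) (ha : a ∈ compSet G p K),
      (Ti K).Adj ⟨v, hv⟩ ⟨a, ha⟩ →
        (Ti K).dist ⟨y K, hy K⟩ ⟨a, ha⟩ < (Ti K).dist ⟨y K, hy K⟩ ⟨v, hv⟩ := by
    intro K hv ha hK
    have := (hTree K).dist_ne_of_adj ⟨y K, hy K⟩ hK
    rw [ht₂ K a ha, ht₂ K v hv] at hle
    omega
  rcases ((fromRel_adj ..).1 h).2 with
    (he | ⟨K, rfl, rfl⟩ | ⟨K, hv, ha, hK⟩) | (he | ⟨K, rfl, rfl⟩ | ⟨K, ha, hv, hK⟩)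
  · exact .inl (hedge he hle)
  · rw [ht₁ _ (hjle K), ht₂ K _ (hy K)] at hle
    omega
  · exact .inr (.inr ⟨K, hv, ha, hK, htree K hv ha hK⟩)
  · exact .inl (hedge (Sym2.eq_swap ▸ he) hle)
  · exact .inr (.inl ⟨K, rfl, rfl⟩)
  · exact .inr (.inr ⟨K, hv, ha, hK.symm, htree K hv ha hK.symm⟩)

theorem glueTree_parent_unique (hp : p.IsPath) (hy : ∀ K, (y K : V) ∈ compSet G p K)
    (hjle : ∀ K, j K ≤ p.length) (hTree : ∀ K, (Ti K).IsTree) {t : V → ℕ}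
    (ht₁ : ∀ i ≤ p.length, t (p.getVert i) = i)
    (ht₂ : ∀ K v (hv : v ∈ compSet G p K), t v = j K + 1 + (Ti K).dist ⟨y K, hy K⟩ ⟨v, hv⟩)
    {v a b : V} (ha : (glueTree p y j Ti).Adj v a) (hb : (glueTree p y j Ti).Adj v b)
    (hav : t a < t v) (hbv : t b < t v) : a = b := by
  have hoff : ∀ K i, p.getVert i ∉ compSet G p K := fun K i h => h.1 (p.getVert_mem_support i)
  rcases glueTree_parent_cases hy hjle hTree ht₁ ht₂ ha hav.le with
    ⟨i, hi, rfl, rfl⟩ | ⟨K, rfl, rfl⟩ | ⟨K, hv, ha', hadj, hd⟩ <;>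
  rcases glueTree_parent_cases hy hjle hTree ht₁ ht₂ hb hbv.le with
    ⟨i', hi', rfl, he⟩ | ⟨K', rfl, he⟩ | ⟨K', hv', hb', hadj', hd'⟩
  · obtain rfl : i = i' := Nat.succ_injective (hp.getVert_injOn hi hi' he)
    rfl
  · exact absurd (he ▸ hy K') (hoff _ _)
  · exact absurd hv' (hoff _ _)
  · exact absurd (he ▸ hy K) (hoff _ _)
  · obtain rfl : K = K' := eq_of_mem_compSet (hy K) (he ▸ hy K')
    rfl
  · obtain rfl : K = K' := eq_of_mem_compSet (hy K) hv'
    simp at hd'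
  · exact absurd (he ▸ hv) (hoff _ _)
  · subst he
    obtain rfl : K = K' := eq_of_mem_compSet hv (hy K')
    simp at hd
  · obtain rfl : K = K' := eq_of_mem_compSet hv hv'
    exact congrArg Subtype.val ((hTree K).eq_of_adj_of_dist_lt _ hadj hadj' hd hd')

theorem glueTree_isAcyclic (hp : p.IsPath) (hy : ∀ K, (y K : V) ∈ compSet G p K)
    (hjle : ∀ K, j K ≤ p.length) (hTree : ∀ K, (Ti K).IsTree) :
    (glueTree p y j Ti).IsAcyclic := by
  obtain ⟨t, ht₁, ht₂⟩ := exists_glueTree_depth (j := j) (Ti := Ti) hp hy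
  refine isAcyclic_of_rank t (fun a b hab heq => ?_)
    fun v a b ha hb => glueTree_parent_unique hp hy hjle hTree ht₁ ht₂ ha hb
  rcases glueTree_parent_cases hy hjle hTree ht₁ ht₂ hab heq.ge with
    ⟨i, hi, rfl, rfl⟩ | ⟨K, rfl, rfl⟩ | ⟨K, ha, hb, -, hd⟩
  · rw [ht₁ _ hi, ht₁ _ hi.le] at heq
    omega
  · rw [ht₂ K _ (hy K), ht₁ _ (hjle K)] at heq
    omega
  · rw [ht₂ K _ ha, ht₂ K _ hb] at heq
    omega

theorem glueTree_isAncestor_getVert (hp : p.IsPath) (hT : (glueTree p y j Ti).IsAcyclic)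
    {a b : ℕ} (hab : a ≤ b) : IsAncestor (glueTree p y j Ti) r (p.getVert a) (p.getVert b) := by
  obtain ⟨w, hw, hsub, -⟩ := glueTree_exists_isPath_getVert hp b
  exact hT.isAncestor_of_mem_support hw (hsub a hab)

theorem glueTree_isAncestor_of_le (hp : p.IsPath) (hy : ∀ K, (y K : V) ∈ compSet G p K)
    (hconn : ∀ K, (Ti K).Connected) (hT : (glueTree p y j Ti).IsAcyclic) {v : V}
    (hv : v ∈ compSet G p K) {i : ℕ} (hi : i ≤ j K) :
    IsAncestor (glueTree p y j Ti) r (p.getVert i) v := by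
  obtain ⟨w, hw, hsub, -⟩ := glueTree_exists_isPath_of_mem_compSet hp hy hconn hv
  exact hT.isAncestor_of_mem_support hw (hsub i hi)

theorem glueTree_isAncestor_of_mem_compSet (hp : p.IsPath)
    (hy : ∀ K, (y K : V) ∈ compSet G p K) (hTree : ∀ K, (Ti K).IsTree)
    (hT : (glueTree p y j Ti).IsAcyclic) {u v : V} (hu : u ∈ compSet G p K)
    (hv : v ∈ compSet G p K) (h : IsAncestor (Ti K) ⟨y K, hy K⟩ ⟨u, hu⟩ ⟨v, hv⟩) :
    IsAncestor (glueTree p y j Ti) r u v := by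
  have hconn K := (hTree K).connected
  obtain ⟨wu, hwu, -, hyu⟩ := glueTree_exists_isPath_of_mem_compSet hp hy hconn hu
  obtain ⟨wv, hwv, -, hyv⟩ := glueTree_exists_isPath_of_mem_compSet hp hy hconn hv
  exact (h.map hT (hconn K) (glueTreeComponentHom K) Subtype.val_injective).of_isAncestor_root
    (hT.isAncestor_of_mem_support hwu hyu) (hT.isAncestor_of_mem_support hwv hyv)

theorem glueTree_treeComparable (hp : p.IsPath) (hy : ∀ K, (y K : V) ∈ compSet G p K)
    (hmax : ∀ K, ∀ i ≤ p.length,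
      (∃ z : {v : V | v ∉ p.support},
        (G.induce {v : V | v ∉ p.support}).connectedComponentMk z = K ∧
          G.Adj (p.getVert i) (z : V)) → i ≤ j K)
    (hTi : ∀ K, IsDFSTree (G.induce (compSet G p K)) (Ti K) ⟨y K, hy K⟩)
    (hT : (glueTree p y j Ti).IsAcyclic) {u v : V} (huv : G.Adj u v) :
    TreeComparable (glueTree p y j Ti) r u v := by
  have hpath_out : ∀ {u v}, G.Adj u v → u ∈ p.support → v ∉ p.support →
      IsAncestor (glueTree p y j Ti) r u v := by
    intro u v huv hu hv
    obtain ⟨i, rfl, hi⟩ := Walk.mem_support_iff_exists_getVert.1 hu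
    exact glueTree_isAncestor_of_le hp hy (fun K => (hTi K).2.1.connected) hT
      (mem_compSet_connectedComponentMk hv) (hmax _ i hi ⟨⟨v, hv⟩, rfl, huv⟩)
  by_cases hu : u ∈ p.support <;> by_cases hv : v ∈ p.support
  · obtain ⟨a, rfl, -⟩ := Walk.mem_support_iff_exists_getVert.1 hu
    obtain ⟨b, rfl, -⟩ := Walk.mem_support_iff_exists_getVert.1 hv
    rcases le_total a b with hab | hab
    · exact .inl (glueTree_isAncestor_getVert hp hT hab)
    · exact .inr (glueTree_isAncestor_getVert hp hT hab)
  · exact .inl (hpath_out huv hu hv)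
  · exact .inr (hpath_out huv.symm hv hu)
  · have hv' := mem_compSet_connectedComponentMk hv
    have hu' : u ∈ compSet G p
        ((G.induce {v : V | v ∉ p.support}).connectedComponentMk ⟨v, hv⟩) :=
      ⟨hu, ConnectedComponent.sound (Adj.reachable (by simpa using huv))⟩
    have hTree K := (hTi K).2.1
    rcases (hTi _).2.2 ⟨u, hu'⟩ ⟨v, hv'⟩ huv with h | h
    · exact .inl (glueTree_isAncestor_of_mem_compSet hp hy hTree hT hu' hv' h)
    · exact .inr (glueTree_isAncestor_of_mem_compSet hp hy hTree hT hv' hu' h)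

end GluedTree

/-- Let `G` be a finite connected simple graph and `P : r = p_0 — … — p_t` a simple path in
`G`. Let the `C_i` be the connected components of the subgraph induced on the vertices
outside `P`. For each component pick an edge `{x_i, y_i}` with `y_i ∈ C_i` and
`x_i = p_{j_i}`, `j_i` maximal among indices `j` such that `p_j` has a neighbor in `C_i`, and
a DFS tree `(T_i, y_i)` of `G[C_i]`. Then the spanning subgraph consisting of the edges of
`P`, the edges `{x_i, y_i}`, and the edges of the `T_i` is a spanning tree of `G` which,
rooted at `r`, is a DFS tree of `G`. -/
theorem stmt9 {V : Type*} (G : SimpleGraph V)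
    {r s : V} (p : G.Walk r s) (hp : p.IsPath)
    (y : (G.induce {v : V | v ∉ p.support}).ConnectedComponent → {v : V | v ∉ p.support})
    (hy : ∀ K, (G.induce {v : V | v ∉ p.support}).connectedComponentMk (y K) = K)
    (j : (G.induce {v : V | v ∉ p.support}).ConnectedComponent → ℕ)
    (hjle : ∀ K, j K ≤ p.length)
    (hadj : ∀ K, G.Adj (p.getVert (j K)) (y K : V))
    (hmax : ∀ K, ∀ i ≤ p.length,
      (∃ z : {v : V | v ∉ p.support},
        (G.induce {v : V | v ∉ p.support}).connectedComponentMk z = K ∧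
          G.Adj (p.getVert i) (z : V)) → i ≤ j K)
    (Ti : ∀ K : (G.induce {v : V | v ∉ p.support}).ConnectedComponent,
      SimpleGraph (compSet G p K))
    (hTi : ∀ K, IsDFSTree (G.induce (compSet G p K)) (Ti K)
      ⟨(y K : V), ⟨(y K).2, by rw [Subtype.coe_eta]; exact hy K⟩⟩) :
    IsDFSTree G
      (SimpleGraph.fromRel (fun a b =>
        s(a, b) ∈ p.edges ∨
        (∃ K, a = p.getVert (j K) ∧ b = (y K : V)) ∨
        (∃ K, ∃ (ha : a ∈ compSet G p K) (hb : b ∈ compSet G p K),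
          (Ti K).Adj ⟨a, ha⟩ ⟨b, hb⟩)))
      r := by
  have hyK : ∀ K, (y K : V) ∈ compSet G p K := fun K => ⟨(y K).2, by simpa using hy K⟩
  have hTree : ∀ K, (Ti K).IsTree := fun K => (hTi K).2.1
  have hT : (glueTree p y j Ti).IsAcyclic := glueTree_isAcyclic hp hyK hjle hTree
  exact ⟨glueTree_le hadj fun K => (hTi K).1,
    ⟨glueTree_connected hp hyK fun K => (hTree K).connected, hT⟩,
    fun u v huv => glueTree_treeComparable hp hyK hmax hTi hT huv⟩
end

section
/- Let (T,r) be a spanning tree of a finite simple graph G rooted at r, and let {x,y} be an edge of G whose endpoints are incomparable in (T,r) (a cross edge). Let w be the deepest common ancestor of x and y in (T,r), and let v be the child of w that is an ancestor of y. Then the spanning subgraph obtained from T by removing the tree edge {w,v} and adding the edge {x,y} is again a spanning tree of G. -/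
namespace SimpleGraph

variable {V : Type*} {G : SimpleGraph V}

lemma fromEdgeSet_edgeSet_sdiff_union_singleton (G : SimpleGraph V) (e : Sym2 V) (x y : V) :
    fromEdgeSet ((G.edgeSet \ {e}) ∪ {s(x, y)}) = G.deleteEdges {e} ⊔ edge x y := by
  ext a b
  simp only [fromEdgeSet_adj, sup_adj, deleteEdges_adj, edge_adj, Set.mem_union, Set.mem_sdiff,
    Set.mem_singleton_iff, mem_edgeSet, Sym2.eq_iff]
  constructor
  · rintro ⟨h | h, hab⟩ <;> tauto
  · rintro (⟨h, he⟩ | ⟨h, hab⟩)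
    · exact ⟨Or.inl ⟨h, he⟩, h.ne⟩
    · tauto

lemma Walk.dist_add_dist_of_mem_support {a c u : V} {p : G.Walk a c}
    (hp : p.length = G.dist a c) (hu : u ∈ p.support) :
    G.dist a u + G.dist u c = G.dist a c := by
  classical
  have hsplit := congrArg Walk.length (p.take_spec hu)
  rw [Walk.length_append] at hsplit
  have := G.dist_le (p.takeUntil u hu)
  have := G.dist_le (p.dropUntil u hu)
  have := (p.dropUntil u hu).reachable.dist_triangle_right a
  omega

lemma Connected.reachable_deleteEdges_or (hG : G.Connected) (w v z : V) :
    (G.deleteEdges {s(w, v)}).Reachable w z ∨ (G.deleteEdges {s(w, v)}).Reachable v z := by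
  induction (reachable_iff_reflTransGen w z).mp (hG w z) with
  | refl => exact .inl .rfl
  | @tail a b _ hab ih =>
    by_cases he : s(a, b) = s(w, v)
    · rcases Sym2.eq_iff.mp he with ⟨-, rfl⟩ | ⟨-, rfl⟩
      · exact .inr .rfl
      · exact .inl .rfl
    · have hab' : (G.deleteEdges {s(w, v)}).Adj a b := deleteEdges_adj.mpr ⟨hab, he⟩
      exact ih.imp (·.trans hab'.reachable) (·.trans hab'.reachable)

lemma Connected.sup_edge_of_not_reachable_deleteEdges (hG : G.Connected) {w v x y : V}
    (hxy : ¬ (G.deleteEdges {s(w, v)}).Reachable x y) :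
    (G.deleteEdges {s(w, v)} ⊔ edge x y).Connected := by
  set H := G.deleteEdges {s(w, v)}
  have hH : H ≤ H ⊔ edge x y := le_sup_left
  have hxy' : (H ⊔ edge x y).Reachable x y :=
    (((edge_adj x y x y).mpr ⟨.inl ⟨rfl, rfl⟩, fun h => hxy (h ▸ .rfl)⟩).reachable).mono
      le_sup_right
  have hwv : (H ⊔ edge x y).Reachable w v := by
    rcases hG.reachable_deleteEdges_or w v x with hx | hx <;>
      rcases hG.reachable_deleteEdges_or w v y with hy | hy
    · exact absurd (hx.symm.trans hy) hxy
    · exact (hx.mono hH).trans (hxy'.trans (hy.mono hH).symm)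
    · exact (hy.mono hH).trans (hxy'.symm.trans (hx.mono hH).symm)
    · exact absurd (hx.symm.trans hy) hxy
  refine (connected_iff_exists_forall_reachable _).mpr ⟨w, fun z => ?_⟩
  rcases hG.reachable_deleteEdges_or w v z with hz | hz
  · exact hz.mono hH
  · exact hwv.trans (hz.mono hH)

lemma IsTree.sup_edge_of_not_reachable_deleteEdges (hG : G.IsTree) {w v x y : V}
    (hxy : ¬ (G.deleteEdges {s(w, v)}).Reachable x y) :
    (G.deleteEdges {s(w, v)} ⊔ edge x y).IsTree :=
  ⟨hG.connected.sup_edge_of_not_reachable_deleteEdges hxy,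
    (hG.isAcyclic.anti (deleteEdges_le _)).sup_edge_of_not_reachable hxy⟩

lemma Reachable.deleteEdges_of_not_isAncestor {r v z : V} (h : G.Reachable r z)
    (hz : ¬ IsAncestor G r v z) (w : V) : (G.deleteEdges {s(w, v)}).Reachable r z := by
  obtain ⟨p, hp⟩ := h.exists_walk_length_eq_dist
  exact reachable_deleteEdges_iff_exists_walk.mpr
    ⟨p, fun he => hz (p.dist_add_dist_of_mem_support hp (p.snd_mem_support_of_mem_edges he))⟩

lemma Connected.reachable_deleteEdges_of_isAncestor (hG : G.Connected) {r w v z : V}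
    (hwv : G.dist r w < G.dist r v) (hz : IsAncestor G r v z) :
    (G.deleteEdges {s(w, v)}).Reachable v z := by
  obtain ⟨p, hp⟩ := hG.exists_walk_length_eq_dist v z
  refine reachable_deleteEdges_iff_exists_walk.mpr ⟨p, fun he => ?_⟩
  have := p.dist_add_dist_of_mem_support hp (p.fst_mem_support_of_mem_edges he)
  have : G.dist r z ≤ G.dist r w + G.dist w z := hG.dist_triangle
  unfold IsAncestor at hz
  omega

end SimpleGraph

open SimpleGraph

theorem stmt10_general {V : Type*} (G T : SimpleGraph V) (r : V)
    (hTG : T ≤ G) (hT : T.IsTree)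
    (x y : V) (hxy : G.Adj x y)
    (w : V)
    (hwdeep : ∀ w' : V, IsAncestor T r w' x → IsAncestor T r w' y →
      T.dist r w' ≤ T.dist r w)
    (v : V) (hv : T.Adj w v) (hwv : IsAncestor T r w v)
    (hvy : IsAncestor T r v y) :
    SimpleGraph.fromEdgeSet ((T.edgeSet \ {s(w, v)}) ∪ {s(x, y)}) ≤ G ∧
    (SimpleGraph.fromEdgeSet ((T.edgeSet \ {s(w, v)}) ∪ {s(x, y)})).IsTree := by
  have hconn := hT.connected
  have hdepth : T.dist r w < T.dist r v := by
    have := dist_eq_one_iff_adj.mpr hv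
    unfold IsAncestor at hwv
    omega
  have hvx : ¬ IsAncestor T r v x := fun h => (hwdeep v h hvy).not_gt hdepth
  have hvw : ¬ IsAncestor T r v w := fun h => by unfold IsAncestor at h; omega
  -- otherwise `w ~ r ~ x ~ y ~ v` in `T - {w, v}`, but `{w, v}` is a bridge of the tree
  have hsep : ¬ (T.deleteEdges {s(w, v)}).Reachable x y := fun h =>
    isAcyclic_iff_forall_adj_isBridge.mp hT.isAcyclic hv <|
      ((hconn r w).deleteEdges_of_not_isAncestor hvw w).symm.trans <|
        ((hconn r x).deleteEdges_of_not_isAncestor hvx w).trans <|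
          h.trans (hconn.reachable_deleteEdges_of_isAncestor hdepth hvy).symm
  rw [fromEdgeSet_edgeSet_sdiff_union_singleton]
  exact ⟨sup_le ((deleteEdges_le _).trans hTG) ((edge_le_iff _).mpr (.inr hxy)),
    hT.sup_edge_of_not_reachable_deleteEdges hsep⟩

/-- Let `(T,r)` be a spanning tree of `G` and `{x,y}` an edge of `G` whose endpoints are
incomparable in `(T,r)`. Let `w` be the deepest common ancestor of `x` and `y` and `v` the
child of `w` that is an ancestor of `y`. Then removing the tree edge `{w,v}` and adding
`{x,y}` yields again a spanning tree of `G`. -/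
theorem stmt10 {V : Type*} [Fintype V] (G T : SimpleGraph V) (r : V)
    (hTG : T ≤ G) (hT : T.IsTree)
    (x y : V) (hxy : G.Adj x y) (hcross : ¬ TreeComparable T r x y)
    (w : V) (hwx : IsAncestor T r w x) (hwy : IsAncestor T r w y)
    (hwdeep : ∀ w' : V, IsAncestor T r w' x → IsAncestor T r w' y →
      T.dist r w' ≤ T.dist r w)
    (v : V) (hv : T.Adj w v) (hwv : IsAncestor T r w v) (hwvne : w ≠ v)
    (hvy : IsAncestor T r v y) :
    SimpleGraph.fromEdgeSet ((T.edgeSet \ {s(w, v)}) ∪ {s(x, y)}) ≤ G ∧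
    (SimpleGraph.fromEdgeSet ((T.edgeSet \ {s(w, v)}) ∪ {s(x, y)})).IsTree :=
  stmt10_general G T r hTG hT x y hxy w hwdeep v hv hwv hvy
end

section
/- Let (T,r) be a spanning tree of a finite simple graph G rooted at r, and let {x,y} be an edge of G whose endpoints are incomparable in (T,r), with depth(x) ≥ depth(y). Let w be the deepest common ancestor of x and y, and v the child of w that is an ancestor of y. Let T' be the spanning tree obtained from T by removing the tree edge {w,v} and adding the edge {x,y}. Then, rooting T' at r, every vertex's depth in (T',r) is greater than or equal to its depth in (T,r) (monotonic fall of levels). -/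
/-! The new depths are bounded below by a potential: a vertex outside the subtree of `v` keeps
its old depth, and a vertex `u` of the subtree gets `depth x + 1 + d_T(y, u)`, which is at least
its old depth because `depth y ≤ depth x`. Since `{w, v}` is the only tree edge leaving the
subtree, the potential changes by at most one along every edge of `T'` and vanishes at `r`, so it
bounds the `T'`-distance from `r` from below. Every vertex other than `r` has a `T'`-neighbour of
smaller potential, so `T'` is connected and that distance is not the junk value `0`. -/

open SimpleGraph

section

variable {V : Type*}

namespace SimpleGraph

variable {H : SimpleGraph V} {s u : V}

lemma Walk.le_add_length_of_adj_le_add_one (f : V → ℕ)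
    (hf : ∀ a b, H.Adj a b → f b ≤ f a + 1) (p : H.Walk s u) : f u ≤ f s + p.length := by
  induction p with
  | nil => simp
  | cons hadj _ ih =>
    have := hf _ _ hadj
    rw [Walk.length_cons]
    omega

lemma Reachable.le_add_dist_of_adj_le_add_one (f : V → ℕ)
    (hf : ∀ a b, H.Adj a b → f b ≤ f a + 1) (hsu : H.Reachable s u) :
    f u ≤ f s + H.dist s u := by
  obtain ⟨p, hp⟩ := hsu.exists_walk_length_eq_dist
  exact hp ▸ p.le_add_length_of_adj_le_add_one f hf

lemma reachable_of_forall_exists_adj_lt (f : V → ℕ) (s : V)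
    (hf : ∀ u, u ≠ s → ∃ p, H.Adj p u ∧ f p < f u) (u : V) : H.Reachable s u := by
  induction hu : f u using Nat.strong_induction_on generalizing u with
  | _ n ih =>
    by_cases hus : u = s
    · subst hus
      rfl
    · obtain ⟨p, hpu, hlt⟩ := hf u hus
      exact (ih (f p) (hu ▸ hlt) p rfl).trans hpu.reachable

lemma dist_le_dist_add_one_of_adj {a b : V} (hab : H.Adj a b) (s : V) :
    H.dist s b ≤ H.dist s a + 1 := by
  have := hab.diff_dist_adj (u := s)
  omega

lemma Connected.exists_adj_dist_add_one_eq_s11 (hc : H.Connected) (hne : s ≠ u) :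
    ∃ p, H.Adj p u ∧ H.dist s p + 1 = H.dist s u := by
  obtain ⟨q, hq⟩ := hc.exists_walk_length_eq_dist s u
  have hnil : ¬q.Nil := fun h => hne h.eq
  refine ⟨q.penultimate, q.adj_penultimate hnil, ?_⟩
  have hle : H.dist s q.penultimate ≤ q.length - 1 := q.length_dropLast ▸ dist_le _
  have hge := dist_le_dist_add_one_of_adj (q.adj_penultimate hnil) s
  have hpos : 0 < q.length := Walk.not_nil_iff_lt_length.mp hnil
  omega

lemma IsTree.eq_of_adj_of_dist_add_one_eq {T : SimpleGraph V} (hT : T.IsTree) {r a b c : V}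
    (hab : T.Adj a b) (hcb : T.Adj c b) (ha : T.dist r a + 1 = T.dist r b)
    (hc : T.dist r c + 1 = T.dist r b) : a = c := by
  classical
  obtain ⟨Q, hQ, -⟩ := hT.connected.exists_path_of_dist r b
  have mem_of_parent : ∀ p, T.Adj p b → T.dist r p + 1 = T.dist r b → p ∈ Q.support := by
    intro p hpb hp
    obtain ⟨P, hP, hPl⟩ := hT.connected.exists_path_of_dist r p
    refine hT.isAcyclic.mem_support_of_ne_mem_support_of_adj_of_isPath hQ hP hpb.symm
      fun hbP => ?_
    have := (dist_le (P.takeUntil b hbP)).trans (P.length_takeUntil_le_length hbP)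
    omega
  rw [hT.isAcyclic.eq_penultimate_of_adj_end hQ hab.symm (mem_of_parent a hab ha),
    hT.isAcyclic.eq_penultimate_of_adj_end hQ hcb.symm (mem_of_parent c hcb hc)]

end SimpleGraph

namespace IsAncestor

variable {T : SimpleGraph V} {r a b v : V}

lemma refl (T : SimpleGraph V) (r v : V) : IsAncestor T r v v := by
  simp [IsAncestor]

lemma dist_le (h : IsAncestor T r v a) : T.dist r v ≤ T.dist r a := by
  unfold IsAncestor at h
  omega

lemma of_adj (hc : T.Connected) (ha : IsAncestor T r v a) (hab : T.Adj a b)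
    (hd : T.dist r b = T.dist r a + 1) : IsAncestor T r v b := by
  unfold IsAncestor at ha ⊢
  have := hc.dist_triangle (u := r) (v := v) (w := b)
  have := dist_le_dist_add_one_of_adj hab v
  omega

lemma exists_parent (hc : T.Connected) (hb : IsAncestor T r v b) (hne : v ≠ b) :
    ∃ p, T.Adj p b ∧ T.dist r p + 1 = T.dist r b ∧ IsAncestor T r v p := by
  obtain ⟨p, hpb, hp⟩ := hc.exists_adj_dist_add_one_eq_s11 hne
  unfold IsAncestor at hb ⊢
  have := hc.dist_triangle (u := r) (v := v) (w := p)
  have := dist_le_dist_add_one_of_adj hpb r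
  exact ⟨p, hpb, by omega, by omega⟩

lemma eq_of_adj_of_not_isAncestor (hT : T.IsTree) {w : V} (hwv : T.Adj w v)
    (hdv : T.dist r v = T.dist r w + 1) (hab : T.Adj a b) (hb : IsAncestor T r v b)
    (ha : ¬IsAncestor T r v a) : a = w ∧ b = v := by
  have hd : T.dist r b = T.dist r a + 1 := by
    rcases hT.dist_eq_dist_add_one_of_adj r hab with h | h
    · exact absurd (hb.of_adj hT.connected hab.symm h) ha
    · exact h
  by_cases hbv : v = b
  · subst hbv
    exact ⟨hT.eq_of_adj_of_dist_add_one_eq hab hwv hd.symm hdv.symm, rfl⟩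
  · obtain ⟨p, hpb, hp, hvp⟩ := hb.exists_parent hT.connected hbv
    exact absurd (hT.eq_of_adj_of_dist_add_one_eq hab hpb hd.symm hp ▸ hvp) ha

end IsAncestor

def edgeExchange (T : SimpleGraph V) (e f : Sym2 V) : SimpleGraph V :=
  fromEdgeSet ((T.edgeSet \ {e}) ∪ {f})

lemma edgeExchange_adj {T : SimpleGraph V} {e f : Sym2 V} {a b : V} :
    (edgeExchange T e f).Adj a b ↔ (T.Adj a b ∧ s(a, b) ≠ e ∨ s(a, b) = f) ∧ a ≠ b := by
  simp only [edgeExchange, fromEdgeSet_adj, Set.mem_union, Set.mem_sdiff, Set.mem_singleton_iff,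
    mem_edgeSet]

noncomputable def exchangeDepth (T : SimpleGraph V) (r v x y u : V) : ℕ :=
  open Classical in
  if IsAncestor T r v u then T.dist r x + 1 + T.dist y u else T.dist r u

section Exchange

variable {T : SimpleGraph V} {r v w x y a b u : V}

lemma exchangeDepth_of_isAncestor (hu : IsAncestor T r v u) :
    exchangeDepth T r v x y u = T.dist r x + 1 + T.dist y u := by
  simp [exchangeDepth, hu]

lemma exchangeDepth_of_not_isAncestor (hu : ¬IsAncestor T r v u) :
    exchangeDepth T r v x y u = T.dist r u := by
  simp [exchangeDepth, hu]

lemma dist_le_exchangeDepth (hc : T.Connected) (hdepth : T.dist r y ≤ T.dist r x) (u : V) :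
    T.dist r u ≤ exchangeDepth T r v x y u := by
  by_cases hu : IsAncestor T r v u
  · have := hc.dist_triangle (u := r) (v := y) (w := u)
    rw [exchangeDepth_of_isAncestor hu]
    omega
  · rw [exchangeDepth_of_not_isAncestor hu]

lemma edgeExchange_adj_of_adj (hw : ¬IsAncestor T r v w) (hab : T.Adj a b)
    (hS : IsAncestor T r v a ↔ IsAncestor T r v b) :
    (edgeExchange T s(w, v) s(x, y)).Adj a b := by
  refine edgeExchange_adj.2 ⟨Or.inl ⟨hab, fun he => hw ?_⟩, hab.ne⟩
  rcases Sym2.eq_iff.1 he with ⟨rfl, rfl⟩ | ⟨rfl, rfl⟩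
  · exact hS.2 (IsAncestor.refl T r b)
  · exact hS.1 (IsAncestor.refl T r a)

lemma exchangeDepth_le_add_one_of_adj (hT : T.IsTree) (hwv : T.Adj w v)
    (hdv : T.dist r v = T.dist r w + 1) (hx : ¬IsAncestor T r v x) (hy : IsAncestor T r v y)
    (hab : (edgeExchange T s(w, v) s(x, y)).Adj a b) :
    exchangeDepth T r v x y b ≤ exchangeDepth T r v x y a + 1 := by
  obtain ⟨⟨hab, hne⟩ | hxy, -⟩ := edgeExchange_adj.1 hab
  · by_cases ha : IsAncestor T r v a <;> by_cases hb : IsAncestor T r v b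
    · rw [exchangeDepth_of_isAncestor ha, exchangeDepth_of_isAncestor hb]
      have := dist_le_dist_add_one_of_adj hab y
      omega
    · obtain ⟨rfl, rfl⟩ := ha.eq_of_adj_of_not_isAncestor hT hwv hdv hab.symm hb
      exact absurd Sym2.eq_swap hne
    · obtain ⟨rfl, rfl⟩ := hb.eq_of_adj_of_not_isAncestor hT hwv hdv hab ha
      exact absurd rfl hne
    · rw [exchangeDepth_of_not_isAncestor ha, exchangeDepth_of_not_isAncestor hb]
      exact dist_le_dist_add_one_of_adj hab r
  · rcases Sym2.eq_iff.1 hxy with ⟨rfl, rfl⟩ | ⟨rfl, rfl⟩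
    all_goals
      simp only [exchangeDepth_of_isAncestor hy, exchangeDepth_of_not_isAncestor hx, dist_self]
      omega

lemma exists_adj_exchangeDepth_lt (hT : T.IsTree) (hwv : T.Adj w v)
    (hdv : T.dist r v = T.dist r w + 1) (hx : ¬IsAncestor T r v x) (hy : IsAncestor T r v y)
    (hwy : IsAncestor T r w y) (hxy : x ≠ y) (hu : u ≠ r) :
    ∃ p, (edgeExchange T s(w, v) s(x, y)).Adj p u ∧
      exchangeDepth T r v x y p < exchangeDepth T r v x y u := by
  have hw : ¬IsAncestor T r v w := fun h => by have := h.dist_le; omega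
  by_cases hS : IsAncestor T r v u
  · by_cases huy : u = y
    · subst huy
      refine ⟨x, edgeExchange_adj.2 ⟨Or.inr rfl, hxy⟩, ?_⟩
      rw [exchangeDepth_of_isAncestor hS, exchangeDepth_of_not_isAncestor hx]
      omega
    obtain ⟨p, hpu, hp⟩ := hT.connected.exists_adj_dist_add_one_eq_s11 (Ne.symm huy)
    have hpS : IsAncestor T r v p := by
      by_contra hpS
      obtain ⟨rfl, rfl⟩ := hS.eq_of_adj_of_not_isAncestor hT hwv hdv hpu hpS
      unfold IsAncestor at hwy hy
      rw [dist_comm (u := y), dist_comm (u := y)] at hp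
      omega
    refine ⟨p, edgeExchange_adj_of_adj hw hpu (iff_of_true hpS hS), ?_⟩
    rw [exchangeDepth_of_isAncestor hpS, exchangeDepth_of_isAncestor hS]
    omega
  · obtain ⟨p, hpu, hp⟩ := hT.connected.exists_adj_dist_add_one_eq_s11 (Ne.symm hu)
    have hpS : ¬IsAncestor T r v p := fun h => hS (h.of_adj hT.connected hpu hp.symm)
    refine ⟨p, edgeExchange_adj_of_adj hw hpu (iff_of_false hpS hS), ?_⟩
    rw [exchangeDepth_of_not_isAncestor hpS, exchangeDepth_of_not_isAncestor hS]
    omega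

end Exchange

end

theorem stmt11_general {V : Type*} (G T : SimpleGraph V) (r : V)
    (hT : T.IsTree)
    (x y : V) (hxy : G.Adj x y)
    (hdepth : T.dist r y ≤ T.dist r x)
    (w : V) (hwy : IsAncestor T r w y)
    (hwdeep : ∀ w' : V, IsAncestor T r w' x → IsAncestor T r w' y →
      T.dist r w' ≤ T.dist r w)
    (v : V) (hv : T.Adj w v) (hwv : IsAncestor T r w v)
    (hvy : IsAncestor T r v y) :
    ∀ z : V, T.dist r z ≤
      (SimpleGraph.fromEdgeSet ((T.edgeSet \ {s(w, v)}) ∪ {s(x, y)})).dist r z := by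
  intro z
  have hdv : T.dist r v = T.dist r w + 1 := by
    have := dist_eq_one_iff_adj.2 hv
    unfold IsAncestor at hwv
    omega
  have hx : ¬IsAncestor T r v x := fun h => by have := hwdeep v h hvy; omega
  have hr : ¬IsAncestor T r v r := fun h => by
    have := h.dist_le
    rw [SimpleGraph.dist_self] at this
    omega
  change T.dist r z ≤ (edgeExchange T s(w, v) s(x, y)).dist r z
  have hreach := reachable_of_forall_exists_adj_lt _ r
    (fun u hu => exists_adj_exchangeDepth_lt hT hv hdv hx hvy hwy hxy.ne hu) z
  calc T.dist r z ≤ exchangeDepth T r v x y z := dist_le_exchangeDepth hT.connected hdepth z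
    _ ≤ exchangeDepth T r v x y r + (edgeExchange T s(w, v) s(x, y)).dist r z :=
      hreach.le_add_dist_of_adj_le_add_one _
        fun a b hab => exchangeDepth_le_add_one_of_adj hT hv hdv hx hvy hab
    _ = (edgeExchange T s(w, v) s(x, y)).dist r z := by
      rw [exchangeDepth_of_not_isAncestor hr, SimpleGraph.dist_self, zero_add]

/-- Let `(T,r)` be a spanning tree of `G` and `{x,y}` an edge of `G` whose endpoints are
incomparable in `(T,r)`, with `depth x ≥ depth y`. Let `w` be the deepest common ancestor of
`x` and `y` and `v` the child of `w` that is an ancestor of `y`. Rooting at `r` the tree `T'`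
obtained by removing the tree edge `{w,v}` and adding `{x,y}`, every vertex's depth in
`(T',r)` is at least its depth in `(T,r)` (monotonic fall of levels). -/
theorem stmt11 {V : Type*} [Fintype V] (G T : SimpleGraph V) (r : V)
    (hTG : T ≤ G) (hT : T.IsTree)
    (x y : V) (hxy : G.Adj x y) (hcross : ¬ TreeComparable T r x y)
    (hdepth : T.dist r y ≤ T.dist r x)
    (w : V) (hwx : IsAncestor T r w x) (hwy : IsAncestor T r w y)
    (hwdeep : ∀ w' : V, IsAncestor T r w' x → IsAncestor T r w' y →
      T.dist r w' ≤ T.dist r w)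
    (v : V) (hv : T.Adj w v) (hwv : IsAncestor T r w v) (hwvne : w ≠ v)
    (hvy : IsAncestor T r v y) :
    ∀ z : V, T.dist r z ≤
      (SimpleGraph.fromEdgeSet ((T.edgeSet \ {s(w, v)}) ∪ {s(x, y)})).dist r z :=
  stmt11_general G T r hT x y hxy hdepth w hwy hwdeep v hv hwv hvy
end

section
/- Let (T,r) be a DFS tree of a finite simple graph G, and let u be a vertex such that every vertex of G is either an ancestor of u or a descendant of u in (T,r). Let G' be a simple graph on the same vertex set containing G as a subgraph, such that every edge of G' that is not an edge of G has at least one endpoint that is an ancestor of u in (T,r). Then (T,r) is also a DFS tree of G'. (Hence, once the partial DFS tree forms such a non-branching 'broomstick' path down to u, all further edges incident to vertices above u can be safely ignored.) -/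
open SimpleGraph

/-- In a tree, every path has length equal to the distance between its endpoints. -/
lemma aux_path_length_eq_dist {V : Type*} {T : SimpleGraph V} (hT : T.IsTree)
    {x y : V} (p : T.Walk x y) (hp : p.IsPath) : p.length = T.dist x y := by
  obtain ⟨q, hq, hql⟩ := hT.isConnected.exists_path_of_dist x y
  rw [(hT.existsUnique_path x y).unique hp hq, hql]

/-- Any ancestor of `u` lies on any path from `r` to `u` in a tree. -/
lemma aux_mem_of_ancestor {V : Type*} {T : SimpleGraph V} (hT : T.IsTree)
    {r u a : V} (ha : IsAncestor T r a u) (P : T.Walk r u) (hP : P.IsPath) :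
    a ∈ P.support := by
  obtain ⟨p1, _, hl1⟩ := hT.isConnected.exists_path_of_dist r a
  obtain ⟨p2, _, hl2⟩ := hT.isConnected.exists_path_of_dist a u
  have hw : (p1.append p2).length = T.dist r u := by
    rw [SimpleGraph.Walk.length_append, hl1, hl2]; exact ha
  have hwp : (p1.append p2).IsPath := (p1.append p2).isPath_of_length_eq_dist hw
  have heq : p1.append p2 = P := (hT.existsUnique_path r u).unique hwp hP
  rw [← heq]
  exact SimpleGraph.Walk.mem_support_append_iff _ _ |>.mpr (Or.inl p1.end_mem_support)

/-- Two ancestors of `u` are comparable. -/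
lemma aux_comparable_of_anc {V : Type*} {T : SimpleGraph V} (hT : T.IsTree)
    {r u a b : V} (ha : IsAncestor T r a u) (hb : IsAncestor T r b u) :
    TreeComparable T r a b := by
  classical
  obtain ⟨P, hP, _⟩ := hT.isConnected.exists_path_of_dist r u
  have hbm : b ∈ P.support := aux_mem_of_ancestor hT hb P hP
  have ham : a ∈ P.support := aux_mem_of_ancestor hT ha P hP
  rw [← SimpleGraph.Walk.take_spec P hbm, SimpleGraph.Walk.mem_support_append_iff] at ham
  rcases ham with ham | ham
  · -- a on the segment r → b : a is ancestor of b
    left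
    set Q := P.takeUntil b hbm with hQ
    have hQp : Q.IsPath := hP.takeUntil hbm
    have h1 : (Q.takeUntil a ham).IsPath := hQp.takeUntil ham
    have h2 : (Q.dropUntil a ham).IsPath := hQp.dropUntil ham
    have := SimpleGraph.Walk.take_spec Q ham
    have hlen : Q.length = (Q.takeUntil a ham).length + (Q.dropUntil a ham).length := by
      conv_lhs => rw [← this]
      rw [SimpleGraph.Walk.length_append]
    rw [aux_path_length_eq_dist hT Q hQp, aux_path_length_eq_dist hT _ h1,
      aux_path_length_eq_dist hT _ h2] at hlen
    exact hlen.symm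
  · -- a on the segment b → u : b is ancestor of a
    right
    set D := P.dropUntil b hbm with hD
    have hDp : D.IsPath := hP.dropUntil hbm
    have hw : ((P.takeUntil b hbm).append (D.takeUntil a ham)).IsPath := by
      apply SimpleGraph.Walk.IsPath.of_append_left (q := D.dropUntil a ham)
      rw [← SimpleGraph.Walk.append_assoc, SimpleGraph.Walk.take_spec D ham,
        SimpleGraph.Walk.take_spec P hbm]
      exact hP
    have hlen : ((P.takeUntil b hbm).append (D.takeUntil a ham)).length
        = (P.takeUntil b hbm).length + (D.takeUntil a ham).length :=
      SimpleGraph.Walk.length_append _ _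
    rw [aux_path_length_eq_dist hT _ hw, aux_path_length_eq_dist hT _ (hP.takeUntil hbm),
      aux_path_length_eq_dist hT _ (hDp.takeUntil ham)] at hlen
    exact hlen.symm

/-- Transitivity through `u`. -/
lemma aux_anc_trans {V : Type*} {T : SimpleGraph V} (hc : T.Connected)
    {r u a b : V} (ha : IsAncestor T r a u) (hb : IsAncestor T r u b) :
    IsAncestor T r a b := by
  unfold IsAncestor at *
  have t1 : T.dist r b ≤ T.dist r a + T.dist a b := hc.dist_triangle
  have t2 : T.dist a b ≤ T.dist a u + T.dist u b := hc.dist_triangle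
  omega

/-- Let `(T,r)` be a DFS tree of `G` and `u` a vertex such that every vertex of `G` is either
an ancestor or a descendant of `u` in `(T,r)` (a "broomstick"). Let `G'` contain `G` on the
same vertex set such that every edge of `G'` not in `G` has at least one endpoint that is an
ancestor of `u`. Then `(T,r)` is also a DFS tree of `G'`. -/
theorem stmt13 {V : Type*} [Fintype V] (G G' T : SimpleGraph V) (r u : V)
    (h : IsDFSTree G T r)
    (hu : ∀ w : V, IsAncestor T r w u ∨ IsAncestor T r u w)
    (hsub : G ≤ G')
    (hnew : ∀ a b : V, G'.Adj a b → ¬ G.Adj a b →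
      IsAncestor T r a u ∨ IsAncestor T r b u) :
    IsDFSTree G' T r := by
  obtain ⟨hle, hT, hback⟩ := h
  refine ⟨le_trans hle hsub, hT, fun a b hab => ?_⟩
  by_cases hG : G.Adj a b
  · exact hback a b hG
  rcases hnew a b hab hG with ha | hb
  · rcases hu b with hb | hb
    · exact aux_comparable_of_anc hT ha hb
    · exact Or.inl (aux_anc_trans hT.isConnected ha hb)
  · rcases hu a with ha | ha
    · exact aux_comparable_of_anc hT ha hb
    · exact Or.inr (aux_anc_trans hT.isConnected hb ha)
end
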